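/- arXiv:math-ph/0110012 — 13 statements merged into one kernel-verified Lean document; each statement's English description precedes it below -/
import Mathlib

section
/- Let n ≥ 3 be an odd integer, let a ∈ ℝ and b ∈ ℝ with b ≠ 0, and define f(x) = a·cosh(bx)/sinh²(bx) for x ≠ 0. Then for all x₁,…,x_{n+1} ∈ ℝ with x_p ≠ x_q whenever p ≠ q, one has Σ_{p=1}^{n+1} ∂/∂x_p [ Π_{q≠p} f(x_p − x_q) ] = 0. -/
open Real Finset

open Polynomial

lemma rs_deriv_fin_prod {ι : Type*} [DecidableEq ι] (s : Finset ι) (f : ι → ℝ[X]) :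
    derivative (∏ i ∈ s, f i) = ∑ i ∈ s, (∏ j ∈ s.erase i, f j) * derivative (f i) := by
  induction s using Finset.induction_on with
  | empty => simp
  | @insert a s ha ih =>
    rw [Finset.prod_insert ha, derivative_mul, Finset.sum_insert ha, Finset.erase_insert ha, ih,
      Finset.mul_sum]
    have h : ∀ i ∈ s, (∏ j ∈ (insert a s).erase i, f j) * derivative (f i)
        = f a * ((∏ j ∈ s.erase i, f j) * derivative (f i)) := by
      intro i hi
      have hia : i ≠ a := fun h => ha (h ▸ hi)
      rw [Finset.erase_insert_of_ne hia.symm,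
        Finset.prod_insert (fun h => ha (Finset.mem_of_mem_erase h)), mul_assoc]
    rw [Finset.sum_congr rfl h, ← Finset.mul_sum]
    ring

lemma rs_sq_dvd (D : ℝ[X]) (c : ℝ)
    (h0 : D.eval c = 0) (h1 : (derivative D).eval c = 0) : (X - C c)^2 ∣ D := by
  obtain ⟨E, hE⟩ := dvd_iff_isRoot.mpr h0
  rw [hE, derivative_mul] at h1
  simp at h1
  obtain ⟨F, hF⟩ := dvd_iff_isRoot.mpr h1
  exact ⟨F, by rw [hE, hF]; ring⟩

lemma rs_core (n m : ℕ) (hm : 1 ≤ m) (hnm : n = 2*m+1) (u : Fin (n+1) → ℝ)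
    (hu : ∀ p q : Fin (n+1), p ≠ q → u p ≠ u q) :
    ∑ p : Fin (n+1), (u p)^m * ∑ q ∈ Finset.univ.erase p,
      (((u p - u q)^2 - 2*(u p + u q)^2)/(u p - u q)^3) *
      ∏ r ∈ (Finset.univ.erase p).erase q, ((u p + u r)/(u p - u r)^2) = 0 := by
  classical
  have hd : ∀ {p q : Fin (n+1)}, p ≠ q → u p - u q ≠ 0 :=
    fun h => sub_ne_zero.2 (hu _ _ h)
  -- abbreviations
  set W : Fin (n+1) → ℝ[X] := fun p => ∏ q ∈ Finset.univ.erase p, (X - C (u q)) with hWdef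
  set P : ℝ[X] := X^m * ∏ q : Fin (n+1), (X + C (u q)) with hPdef
  set Δ : Fin (n+1) → ℝ := fun p => ∏ q ∈ Finset.univ.erase p, (u p - u q) with hΔdef
  set Wd : Fin (n+1) → ℝ := fun p => ∑ q ∈ Finset.univ.erase p,
      ∏ r ∈ (Finset.univ.erase p).erase q, (u p - u r) with hWddef
  set Pe : Fin (n+1) → ℝ := fun p => (u p)^m * ∏ q : Fin (n+1), (u p + u q) with hPedef
  set Pd : Fin (n+1) → ℝ := fun p => (m : ℝ) * (u p)^(m-1) * (∏ q : Fin (n+1), (u p + u q))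
      + (u p)^m * ∑ q : Fin (n+1), ∏ r ∈ Finset.univ.erase q, (u p + u r) with hPddef
  have hΔ0 : ∀ p, Δ p ≠ 0 := by
    intro p
    exact Finset.prod_ne_zero_iff.mpr fun q hq => hd (Finset.ne_of_mem_erase hq).symm
  have hWeval : ∀ p, eval (u p) (W p) = Δ p := by
    intro p; simp [hWdef, eval_prod, hΔdef]
  have hWq0 : ∀ p q : Fin (n+1), p ≠ q → eval (u p) (W q) = 0 := by
    intro p q hpq
    simp only [hWdef, eval_prod]
    exact Finset.prod_eq_zero (Finset.mem_erase.mpr ⟨hpq, Finset.mem_univ p⟩) (by simp)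
  have hWder : ∀ p, eval (u p) (derivative (W p)) = Wd p := by
    intro p
    rw [hWdef, rs_deriv_fin_prod]
    simp [eval_finset_sum, eval_prod, hWddef]
  have hPeval : ∀ p, eval (u p) P = Pe p := by
    intro p; simp [hPdef, eval_prod, hPedef]
  have hPder : ∀ p, eval (u p) (derivative P) = Pd p := by
    intro p
    rw [hPdef, derivative_mul, rs_deriv_fin_prod]
    simp [eval_prod, eval_finset_sum, derivative_X_pow, hPddef]
  set c : Fin (n+1) → ℝ := fun p => Pe p / (Δ p)^2 with hcdef
  set r : Fin (n+1) → ℝ := fun p => (Pd p * Δ p - 2 * Pe p * Wd p) / (Δ p)^3 with hrdef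
  set T : Fin (n+1) → ℝ[X] := fun p => (C (c p) + C (r p) * (X - C (u p))) * (W p)^2 with hTdef
  set D : ℝ[X] := P - ∑ p : Fin (n+1), T p with hDdef
  -- Step A : D = 0
  have hD0 : D = 0 := by
    have hdvd : ∀ p : Fin (n+1), (X - C (u p))^2 ∣ D := by
      intro p
      apply rs_sq_dvd
      · have hsum : ∑ q : Fin (n+1), eval (u p) (T q) = c p * (Δ p)^2 := by
          rw [Finset.sum_eq_single p]
          · simp [hTdef, hWeval p]
          · intro q _ hqp
            simp [hTdef, hWq0 p q (Ne.symm hqp)]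
          · intro h; exact absurd (Finset.mem_univ p) h
        rw [hDdef]
        simp only [eval_sub, eval_finset_sum]
        rw [hsum, hcdef, hPeval]
        have key : ∀ (A d : ℝ), d ≠ 0 → A - A / d^2 * d^2 = 0 := by
          intro A d hd0; field_simp; ring
        exact key _ _ (hΔ0 p)
      · have hders : derivative D = derivative P - ∑ q : Fin (n+1), derivative (T q) := by
          rw [hDdef, derivative_sub, derivative_sum]
        have hsum : ∑ q : Fin (n+1), eval (u p) (derivative (T q))
            = r p * (Δ p)^2 + c p * (2 * Δ p * Wd p) := by
          rw [Finset.sum_eq_single p]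
          · simp [hTdef, derivative_mul, derivative_pow, hWeval p, hWder p]
          · intro q _ hqp
            simp [hTdef, derivative_mul, derivative_pow, hWq0 p q (Ne.symm hqp)]
          · intro h; exact absurd (Finset.mem_univ p) h
        rw [hders]
        simp only [eval_sub, eval_finset_sum]
        rw [hsum, hrdef, hcdef, hPder]
        have key : ∀ (A B V d : ℝ), d ≠ 0 →
            A - ((A*d - 2*B*V)/d^3 * d^2 + B/d^2 * (2*d*V)) = 0 := by
          intro A B V d hd0; field_simp; ring
        exact key _ _ _ _ (hΔ0 p)
    have hdvdall : (∏ p : Fin (n+1), (X - C (u p))^2) ∣ D := by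
      apply Finset.prod_dvd_of_coprime
      · intro p _ q hq hpq
        exact IsCoprime.pow
          (Polynomial.isCoprime_X_sub_C_of_isUnit_sub (isUnit_iff_ne_zero.mpr (hd hpq)))
      · exact fun p _ => hdvd p
    have hdeg1 : (∏ p : Fin (n+1), (X - C (u p))^2).natDegree = 2*(n+1) := by
      rw [Polynomial.natDegree_prod _ _ (fun p _ => pow_ne_zero _ (X_sub_C_ne_zero (u p)))]
      simp [natDegree_pow, natDegree_X_sub_C, Finset.card_univ, mul_comm]
    have hdegP : P.natDegree ≤ m + (n+1) := by
      rw [hPdef]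
      refine le_trans natDegree_mul_le ?_
      have h1 : (X^m : ℝ[X]).natDegree = m := natDegree_X_pow m
      have h2 : (∏ q : Fin (n+1), (X + C (u q))).natDegree ≤ n+1 := by
        refine le_trans (natDegree_prod_le _ _) ?_
        simp [natDegree_X_add_C]
      omega
    have hdegT : ∀ p, (T p).natDegree ≤ 2*n+1 := by
      intro p
      rw [hTdef]
      refine le_trans natDegree_mul_le ?_
      have hL : (C (c p) + C (r p) * (X - C (u p))).natDegree ≤ 1 := by
        refine le_trans (natDegree_add_le _ _) ?_
        refine max_le (by simp) (le_trans natDegree_mul_le ?_)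
        simp [natDegree_X_sub_C]
      have hWn : (W p).natDegree ≤ n := by
        rw [hWdef]
        refine le_trans (natDegree_prod_le _ _) ?_
        simp [natDegree_X_sub_C, Finset.card_erase_of_mem, Finset.card_univ]
      have hW2 : ((W p)^2).natDegree ≤ 2*n := by
        rw [natDegree_pow]; omega
      omega
    have hs : (∑ p : Fin (n+1), T p).natDegree ≤ 2*n+1 :=
      natDegree_sum_le_of_forall_le _ _ fun p _ => hdegT p
    have hdegD : D.natDegree < 2*(n+1) := by
      have h3 := natDegree_sub_le P (∑ p : Fin (n+1), T p)
      rw [← hDdef] at h3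
      have : m < n := by omega
      omega
    exact eq_zero_of_dvd_of_natDegree_lt hdvdall (by omega)
  -- Step B : ∑ r = 0
  have hrsum : ∑ p : Fin (n+1), r p = 0 := by
    have hPeq : P = ∑ p : Fin (n+1), T p := by
      have h := hD0
      rw [hDdef, sub_eq_zero] at h
      exact h
    have hWmonic : ∀ p, ((W p)^2).Monic := by
      intro p
      simp only [hWdef]
      exact (Polynomial.monic_prod_of_monic _ _ fun q _ => monic_X_sub_C (u q)).pow 2
    have hWdeg : ∀ p, ((W p)^2).natDegree = 2*n := by
      intro p
      rw [natDegree_pow, hWdef]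
      have : (∏ q ∈ Finset.univ.erase p, (X - C (u q))).natDegree = n := by
        rw [Polynomial.natDegree_prod _ _ (fun q _ => X_sub_C_ne_zero (u q))]
        simp [natDegree_X_sub_C, Finset.card_erase_of_mem, Finset.card_univ]
      rw [this]
    have hcoeffT : ∀ p, (T p).coeff (2*n+1) = r p := by
      intro p
      have hexp : T p = C (c p) * (W p)^2 + C (r p) * (X * (W p)^2)
          - C (r p * u p) * (W p)^2 := by
        rw [hTdef, C_mul]; ring
      rw [hexp]
      have h1 : ((W p)^2).coeff (2*n+1) = 0 :=
        coeff_eq_zero_of_natDegree_lt (by rw [hWdeg p]; omega)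
      have h2 : (X * (W p)^2).coeff (2*n+1) = 1 := by
        have : (2*n+1) = (2*n)+1 := by omega
        rw [this, coeff_X_mul, ← hWdeg p]
        exact (hWmonic p).coeff_natDegree
      rw [coeff_sub, coeff_add, coeff_C_mul, coeff_C_mul, coeff_C_mul, h1, h2]
      ring
    have hcoeffP : P.coeff (2*n+1) = 0 := by
      apply coeff_eq_zero_of_natDegree_lt
      have hdegP : P.natDegree ≤ m + (n+1) := by
        rw [hPdef]
        refine le_trans natDegree_mul_le ?_
        have h2 : (∏ q : Fin (n+1), (X + C (u q))).natDegree ≤ n+1 := by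
          refine le_trans (natDegree_prod_le _ _) ?_
          simp [natDegree_X_add_C]
        have h1 : (X^m : ℝ[X]).natDegree = m := natDegree_X_pow m
        omega
      omega
    have := congrArg (fun Q : ℝ[X] => Q.coeff (2*n+1)) hPeq
    simp only [Polynomial.finset_sum_coeff] at this
    rw [hcoeffP] at this
    rw [Finset.sum_congr rfl fun p _ => hcoeffT p] at this
    exact this.symm
  -- Step C : each summand equals r p
  have hterm : ∀ p : Fin (n+1), (u p)^m * (∑ q ∈ Finset.univ.erase p,
      (((u p - u q)^2 - 2*(u p + u q)^2)/(u p - u q)^3) *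
      ∏ r' ∈ (Finset.univ.erase p).erase q, ((u p + u r')/(u p - u r')^2)) = r p := by
    intro p
    have hcard : (Finset.univ.erase p).card = n := by
      rw [Finset.card_erase_of_mem (Finset.mem_univ p), Finset.card_univ]
      simp
    have hΔexp : Δ p = ∏ q ∈ Finset.univ.erase p, (u p - u q) := by rw [hΔdef]
    have hsummand : ∀ q ∈ Finset.univ.erase p,
        (((u p - u q)^2 - 2*(u p + u q)^2)/(u p - u q)^3) *
          ∏ r' ∈ (Finset.univ.erase p).erase q, ((u p + u r')/(u p - u r')^2)
        = (((u p - u q)^2 - 2*(u p + u q)^2) *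
            ∏ r' ∈ (Finset.univ.erase p).erase q, ((u p + u r')*(u p - u r'))) /
            (∏ r'' ∈ Finset.univ.erase p, (u p - u r''))^3 := by
      intro q hq
      have hqp : q ≠ p := Finset.ne_of_mem_erase hq
      have hdq : u p - u q ≠ 0 := hd (Ne.symm hqp)
      have hsplit : ∏ r'' ∈ Finset.univ.erase p, (u p - u r'')
          = (u p - u q) * ∏ r' ∈ (Finset.univ.erase p).erase q, (u p - u r') :=
        (Finset.mul_prod_erase (Finset.univ.erase p) (fun i => u p - u i) hq).symm
      have hPA : ∏ r' ∈ (Finset.univ.erase p).erase q, ((u p + u r')/(u p - u r')^2)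
          = (∏ r' ∈ (Finset.univ.erase p).erase q, ((u p + u r')*(u p - u r'))) /
            (∏ r' ∈ (Finset.univ.erase p).erase q, (u p - u r'))^3 := by
        rw [← Finset.prod_pow, ← Finset.prod_div_distrib]
        refine Finset.prod_congr rfl fun r' hr' => ?_
        have hdr : u p - u r' ≠ 0 :=
          hd (Ne.symm (Finset.ne_of_mem_erase (Finset.mem_of_mem_erase hr')))
        field_simp
      rw [hPA, hsplit, div_mul_div_comm, mul_pow]
    rw [Finset.sum_congr rfl hsummand, ← Finset.sum_div, hrdef, ← mul_div_assoc]
    simp only [hPddef, hPedef, hWddef, hΔdef]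
    congr 1
    have hsplitE : ∏ q : Fin (n+1), (u p + u q)
        = (2*u p) * ∏ q ∈ Finset.univ.erase p, (u p + u q) := by
      rw [← Finset.mul_prod_erase _ _ (Finset.mem_univ p)]
      ring_nf
    have hsplitS : ∑ q : Fin (n+1), ∏ r' ∈ Finset.univ.erase q, (u p + u r')
        = (∏ r' ∈ Finset.univ.erase p, (u p + u r'))
          + (2*u p) * ∑ q ∈ Finset.univ.erase p,
              ∏ r' ∈ (Finset.univ.erase p).erase q, (u p + u r') := by
      rw [← Finset.add_sum_erase _ _ (Finset.mem_univ p), Finset.mul_sum]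
      congr 1
      refine Finset.sum_congr rfl fun q hq => ?_
      have hpq : p ≠ q := (Finset.ne_of_mem_erase hq).symm
      rw [← Finset.mul_prod_erase _ _ (Finset.mem_erase.mpr ⟨hpq, Finset.mem_univ p⟩),
        Finset.erase_right_comm]
      ring_nf
    have hper : ∀ q ∈ Finset.univ.erase p,
        ((u p - u q)^2 - 2*(u p + u q)^2) *
          ∏ r' ∈ (Finset.univ.erase p).erase q, ((u p + u r')*(u p - u r'))
        = (2*u p*(∏ r'' ∈ Finset.univ.erase p, (u p - u r'')))
              * (∏ r' ∈ (Finset.univ.erase p).erase q, (u p + u r'))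
          - (4*u p*(∏ r' ∈ Finset.univ.erase p, (u p + u r')))
              * (∏ r' ∈ (Finset.univ.erase p).erase q, (u p - u r'))
          + (∏ r' ∈ Finset.univ.erase p, (u p + u r'))
              * (∏ r'' ∈ Finset.univ.erase p, (u p - u r'')) := by
      intro q hq
      have h1 : (u p - u q) * ∏ r' ∈ (Finset.univ.erase p).erase q, (u p - u r')
          = ∏ r'' ∈ Finset.univ.erase p, (u p - u r'') :=
        Finset.mul_prod_erase (Finset.univ.erase p) (fun i => u p - u i) hq
      have h2 : (u p + u q) * ∏ r' ∈ (Finset.univ.erase p).erase q, (u p + u r')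
          = ∏ r' ∈ Finset.univ.erase p, (u p + u r') :=
        Finset.mul_prod_erase (Finset.univ.erase p) (fun i => u p + u i) hq
      rw [Finset.prod_mul_distrib, ← h1, ← h2]
      ring
    rw [Finset.sum_congr rfl hper, Finset.sum_add_distrib, Finset.sum_sub_distrib,
      ← Finset.mul_sum, ← Finset.mul_sum, Finset.sum_const, hcard, nsmul_eq_mul]
    have hupow : u p ^ m = u p ^ (m-1) * u p := by
      rw [← pow_succ]
      congr 1
      omega
    have hncast : (n:ℝ) = 2*(m:ℝ)+1 := by rw [hnm]; push_cast; ring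
    rw [hsplitE, hsplitS, hupow, hncast]
    ring
  rw [Finset.sum_congr rfl fun p _ => hterm p]
  exact hrsum

/-- For odd `n ≥ 3` and `b ≠ 0`, the function
`f(x) = a cosh(bx)/sinh²(bx)` satisfies the Ruijsenaars–Schneider
functional equation
`∑_{p=1}^{n+1} ∂/∂x_p [ ∏_{q≠p} f(x_p − x_q) ] = 0`
at all points with pairwise distinct coordinates. -/
theorem stmt0 (n : ℕ) (hn : 3 ≤ n) (hodd : Odd n) (a b : ℝ) (hb : b ≠ 0)
    (f : ℝ → ℝ) (hf : ∀ x : ℝ, x ≠ 0 → f x = a * Real.cosh (b * x) / (Real.sinh (b * x)) ^ 2)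
    (x : Fin (n + 1) → ℝ) (hx : ∀ p q, p ≠ q → x p ≠ x q) :
    ∑ p : Fin (n + 1),
      deriv (fun t : ℝ => ∏ q ∈ Finset.univ.erase p, f (t - x q)) (x p) = 0 := by
  classical
  obtain ⟨m, hm⟩ := hodd
  have hm1 : 1 ≤ m := by omega
  set s : Fin (n+1) → ℝ := fun p => Real.exp (b * x p) with hsdef
  set u : Fin (n+1) → ℝ := fun p => (s p)^2 with hudef
  have hspos : ∀ p, 0 < s p := fun p => Real.exp_pos _
  have hs0 : ∀ p, s p ≠ 0 := fun p => (hspos p).ne'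
  have hsinj : ∀ p q : Fin (n+1), p ≠ q → s p ≠ s q := by
    intro p q hpq h
    rw [hsdef] at h
    exact hx p q hpq (mul_left_cancel₀ hb (Real.exp_injective h))
  have hu0 : ∀ p q : Fin (n+1), p ≠ q → u p ≠ u q := by
    intro p q hpq h
    have h2 : (s p - s q) * (s p + s q) = 0 := by
      have : s p ^ 2 - s q ^ 2 = 0 := by rw [hudef] at h; simp at h; rw [h]; ring
      nlinarith [this]
    rcases mul_eq_zero.mp h2 with h3 | h3
    · exact hsinj p q hpq (by linarith)
    · nlinarith [hspos p, hspos q]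
  have hd0 : ∀ {p q : Fin (n+1)}, p ≠ q → u p - u q ≠ 0 :=
    fun h => sub_ne_zero.2 (hu0 _ _ h)
  have hsinh : ∀ p q : Fin (n+1), Real.sinh (b*(x p - x q)) = (u p - u q)/(2*(s p * s q)) := by
    intro p q
    rw [Real.sinh_eq, hudef, hsdef]
    simp only [mul_sub, Real.exp_sub, neg_sub]
    field_simp [Real.exp_ne_zero]
  have hcosh : ∀ p q : Fin (n+1), Real.cosh (b*(x p - x q)) = (u p + u q)/(2*(s p * s q)) := by
    intro p q
    rw [Real.cosh_eq, hudef, hsdef]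
    simp only [mul_sub, Real.exp_sub, neg_sub]
    field_simp [Real.exp_ne_zero]
  have hfval : ∀ p q : Fin (n+1), p ≠ q →
      f (x p - x q) = (2*a*s p) * (s q * ((u p + u q)/(u p - u q)^2)) := by
    intro p q hpq
    rw [hf _ (sub_ne_zero.2 (hx p q hpq)), hsinh p q, hcosh p q]
    have hd : u p - u q ≠ 0 := hd0 hpq
    field_simp
  have hder : ∀ p : Fin (n+1), HasDerivAt (fun t => ∏ q ∈ Finset.univ.erase p, f (t - x q))
      (∑ q ∈ Finset.univ.erase p, (∏ r ∈ (Finset.univ.erase p).erase q, f (x p - x r)) *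
        (2*a*b*(s p*s q)*(((u p - u q)^2 - 2*(u p + u q)^2)/(u p - u q)^3))) (x p) := by
    intro p
    have hfac : ∀ q ∈ Finset.univ.erase p, HasDerivAt (fun t => f (t - x q))
        (2*a*b*(s p*s q)*(((u p - u q)^2 - 2*(u p + u q)^2)/(u p - u q)^3)) (x p) := by
      intro q hq
      have hqp : q ≠ p := Finset.ne_of_mem_erase hq
      have hxpq : x p ≠ x q := hx p q hqp.symm
      have hbx : b*(x p - x q) ≠ 0 := mul_ne_zero hb (sub_ne_zero.2 hxpq)
      have hsh : Real.sinh (b*(x p - x q)) ≠ 0 := Real.sinh_ne_zero.mpr hbx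
      have hlin : HasDerivAt (fun t : ℝ => b*(t - x q)) b (x p) := by
        simpa using ((hasDerivAt_id (x p)).sub_const (x q)).const_mul b
      have hnum : HasDerivAt (fun t => a * Real.cosh (b*(t - x q)))
          (a * (Real.sinh (b*(x p - x q)) * b)) (x p) := hlin.cosh.const_mul a
      have hden : HasDerivAt (fun t => Real.sinh (b*(t - x q))^2)
          (2 * Real.sinh (b*(x p - x q)) ^ 1 * (Real.cosh (b*(x p - x q)) * b)) (x p) := by
        simpa using hlin.sinh.fun_pow 2
      have hmodel := hnum.div hden (pow_ne_zero 2 hsh)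
      have hval : (a * (Real.sinh (b*(x p - x q)) * b) * Real.sinh (b*(x p - x q))^2
            - a * Real.cosh (b*(x p - x q)) *
              (2 * Real.sinh (b*(x p - x q)) ^ 1 * (Real.cosh (b*(x p - x q)) * b)))
            / (Real.sinh (b*(x p - x q))^2)^2
          = 2*a*b*(s p*s q)*(((u p - u q)^2 - 2*(u p + u q)^2)/(u p - u q)^3) := by
        rw [hsinh p q, hcosh p q]
        have hd : u p - u q ≠ 0 := hd0 hqp.symm
        have hS : s p * s q ≠ 0 := mul_ne_zero (hs0 p) (hs0 q)
        field_simp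
      rw [hval] at hmodel
      apply hmodel.congr_of_eventuallyEq
      filter_upwards [eventually_ne_nhds hxpq] with t ht
      exact hf (t - x q) (sub_ne_zero.2 ht)
    have h := HasDerivAt.fun_finsetProd hfac
    simpa [smul_eq_mul] using h
  have hcardee : ∀ (p q : Fin (n+1)), q ∈ Finset.univ.erase p →
      ((Finset.univ.erase p).erase q).card = n - 1 := by
    intro p q hq
    rw [Finset.card_erase_of_mem hq, Finset.card_erase_of_mem (Finset.mem_univ p),
      Finset.card_univ]
    simp
  have hC : ∀ p : Fin (n+1),
      ∑ q ∈ Finset.univ.erase p, (∏ r ∈ (Finset.univ.erase p).erase q, f (x p - x r)) *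
        (2*a*b*(s p*s q)*(((u p - u q)^2 - 2*(u p + u q)^2)/(u p - u q)^3))
      = ((2*a)^n * b * ∏ q : Fin (n+1), s q) *
        ((u p)^m * ∑ q ∈ Finset.univ.erase p,
          (((u p - u q)^2 - 2*(u p + u q)^2)/(u p - u q)^3) *
          ∏ r ∈ (Finset.univ.erase p).erase q, ((u p + u r)/(u p - u r)^2)) := by
    intro p
    have hstep : ∀ q ∈ Finset.univ.erase p,
        (∏ r ∈ (Finset.univ.erase p).erase q, f (x p - x r)) *
          (2*a*b*(s p*s q)*(((u p - u q)^2 - 2*(u p + u q)^2)/(u p - u q)^3))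
        = ((2*a)^n * b * ∏ q' : Fin (n+1), s q') *
          ((u p)^m * ((((u p - u q)^2 - 2*(u p + u q)^2)/(u p - u q)^3) *
            ∏ r ∈ (Finset.univ.erase p).erase q, ((u p + u r)/(u p - u r)^2))) := by
      intro q hq
      have hqp : q ≠ p := Finset.ne_of_mem_erase hq
      have hprod : ∏ r ∈ (Finset.univ.erase p).erase q, f (x p - x r)
          = (2*a*s p)^(n-1) * ((∏ r ∈ (Finset.univ.erase p).erase q, s r) *
              ∏ r ∈ (Finset.univ.erase p).erase q, ((u p + u r)/(u p - u r)^2)) := by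
        rw [Finset.prod_congr rfl (fun r hr => hfval p r
          (Finset.ne_of_mem_erase (Finset.mem_of_mem_erase hr)).symm)]
        rw [Finset.prod_mul_distrib, Finset.prod_const, hcardee p q hq, Finset.prod_mul_distrib]
      rw [hprod]
      have hsq : s q * ∏ r ∈ (Finset.univ.erase p).erase q, s r
          = ∏ r ∈ Finset.univ.erase p, s r :=
        Finset.mul_prod_erase (Finset.univ.erase p) (fun i => s i) hq
      have hsp : s p * ∏ r ∈ Finset.univ.erase p, s r = ∏ r : Fin (n+1), s r :=
        Finset.mul_prod_erase Finset.univ (fun i => s i) (Finset.mem_univ p)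
      have hpow : (s p)^(n-1) = (u p)^m := by
        rw [hudef, ← pow_mul]
        congr 1
        omega
      have hexp : (2*a*s p)^(n-1) = (2*a)^(n-1) * (u p)^m := by
        rw [mul_pow, hpow]
      have h2 : (2*a)^n = (2*a)^(n-1) * (2*a) := by
        rw [← pow_succ]
        congr 1
        omega
      rw [hexp, h2, ← hsp, ← hsq]
      ring
    rw [Finset.sum_congr rfl hstep, ← Finset.mul_sum, ← Finset.mul_sum]
  have hfin : ∀ p : Fin (n+1), deriv (fun t : ℝ => ∏ q ∈ Finset.univ.erase p, f (t - x q)) (x p)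
      = (∑ q ∈ Finset.univ.erase p, (∏ r ∈ (Finset.univ.erase p).erase q, f (x p - x r)) *
        (2*a*b*(s p*s q)*(((u p - u q)^2 - 2*(u p + u q)^2)/(u p - u q)^3))) :=
    fun p => (hder p).deriv
  rw [Finset.sum_congr rfl fun p _ => hfin p, Finset.sum_congr rfl fun p _ => hC p,
    ← Finset.mul_sum, rs_core n m hm1 hm u hu0, mul_zero]
end

section
/- Let n ≥ 2 be an integer and let f(x) = 1/x² for x ≠ 0. Then for all x₁,…,x_{n+1} ∈ ℝ with x_p ≠ x_q whenever p ≠ q, one has Σ_{p=1}^{n+1} ∂/∂x_p [ Π_{q≠p} f(x_p − x_q) ] = 0. -/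
open Real Finset Polynomial

lemma sq_dvd_of_root_of_deriv_root {P : Polynomial ℝ} {a : ℝ}
    (h0 : P.eval a = 0) (h1 : P.derivative.eval a = 0) :
    (X - C a) ^ 2 ∣ P := by
  obtain ⟨P₁, rfl⟩ := (Polynomial.dvd_iff_isRoot.mpr h0)
  have h2 : P₁.eval a = 0 := by
    simp [Polynomial.derivative_mul] at h1
    simpa using h1
  obtain ⟨P₂, rfl⟩ := (Polynomial.dvd_iff_isRoot.mpr h2)
  exact ⟨P₂, by ring⟩

/-- For every integer `n ≥ 2`, the function `f(x) = 1/x²`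
satisfies the Ruijsenaars–Schneider functional equation
`∑_{p=1}^{n+1} ∂/∂x_p [ ∏_{q≠p} f(x_p − x_q) ] = 0`
at all points with pairwise distinct coordinates. -/
theorem stmt1 (n : ℕ) (hn : 2 ≤ n)
    (f : ℝ → ℝ) (hf : ∀ x : ℝ, x ≠ 0 → f x = 1 / x ^ 2)
    (x : Fin (n + 1) → ℝ) (hx : ∀ p q, p ≠ q → x p ≠ x q) :
    ∑ p : Fin (n + 1),
      deriv (fun t : ℝ => ∏ q ∈ Finset.univ.erase p, f (t - x q)) (x p) = 0 := by
  classical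
  set Q : Fin (n + 1) → Polynomial ℝ :=
    fun p => ∏ q ∈ Finset.univ.erase p, (X - C (x q)) with hQ
  have hQeval : ∀ p t, (Q p).eval t = ∏ q ∈ Finset.univ.erase p, (t - x q) := by
    intro p t; simp [hQ, eval_prod]
  have hQmonic : ∀ p, (Q p).Monic := fun p =>
    monic_prod_of_monic _ _ fun q _ => monic_X_sub_C _
  have hQdeg : ∀ p, (Q p).natDegree = n := by
    intro p
    rw [hQ, natDegree_prod _ _ fun q _ => X_sub_C_ne_zero _]
    simp
  have hc : ∀ p, (Q p).eval (x p) ≠ 0 := by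
    intro p
    rw [hQeval]
    exact Finset.prod_ne_zero_iff.mpr fun q hq =>
      sub_ne_zero_of_ne (hx p q (Finset.ne_of_mem_erase hq).symm)
  set B : Fin (n + 1) → ℝ :=
    fun p => -2 * (Q p).derivative.eval (x p) / ((Q p).eval (x p)) ^ 3 with hB
  set A : Fin (n + 1) → ℝ := fun p => (((Q p).eval (x p)) ^ 2)⁻¹ with hA
  -- Step 1: the derivative at x p equals B p
  have hderiv : ∀ p,
      deriv (fun t : ℝ => ∏ q ∈ Finset.univ.erase p, f (t - x q)) (x p) = B p := by
    intro p
    have heq : (fun t : ℝ => ∏ q ∈ Finset.univ.erase p, f (t - x q))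
        =ᶠ[nhds (x p)] fun t => (((Q p).eval t) ^ 2)⁻¹ := by
      have hopen : IsOpen {t : ℝ | (Q p).eval t ≠ 0} :=
        isOpen_ne.preimage (Q p).continuous_aeval
      filter_upwards [hopen.mem_nhds (hc p)] with t ht
      have hne : ∀ q ∈ Finset.univ.erase p, t - x q ≠ 0 := by
        intro q hq h
        exact ht (by rw [hQeval]; exact Finset.prod_eq_zero hq h)
      rw [hQeval]
      rw [Finset.prod_congr rfl fun q hq => hf _ (hne q hq)]
      rw [← Finset.prod_pow]
      simp [Finset.prod_inv_distrib, one_div]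
    rw [heq.deriv_eq]
    have h1 : HasDerivAt (fun t => (Q p).eval t) ((Q p).derivative.eval (x p)) (x p) :=
      (Q p).hasDerivAt (x p)
    have h2 := (h1.pow 2).inv (pow_ne_zero 2 (hc p))
    rw [HasDerivAt.deriv (f := fun t => ((Q p).eval t ^ 2)⁻¹) h2, Pi.pow_apply]
    rw [hB]
    rw [div_eq_div_iff (pow_ne_zero 2 (pow_ne_zero 2 (hc p))) (pow_ne_zero 3 (hc p))]
    push_cast
    ring
  -- Step 2: the polynomial identity
  set R : Polynomial ℝ :=
    ∑ p : Fin (n + 1), (C (A p) + C (B p) * (X - C (x p))) * (Q p) ^ 2 with hR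
  have hQroot : ∀ p r : Fin (n + 1), p ≠ r → (Q r).eval (x p) = 0 := by
    intro p r h
    rw [hQeval]
    exact Finset.prod_eq_zero (Finset.mem_erase.mpr ⟨h, Finset.mem_univ _⟩) (sub_self _)
  have hRe : ∀ p, R.eval (x p) = 1 := by
    intro p
    rw [hR, eval_finset_sum]
    rw [Finset.sum_eq_single p]
    · simp [hA, hc p]
    · intro r _ hr
      simp [hQroot p r (Ne.symm hr)]
    · simp
  have hRd : ∀ p, R.derivative.eval (x p) = 0 := by
    intro p
    rw [hR, derivative_sum, eval_finset_sum]
    rw [Finset.sum_eq_single p]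
    · have hd : ((C (A p) + C (B p) * (X - C (x p))) * (Q p) ^ 2).derivative.eval (x p)
          = B p * ((Q p).eval (x p)) ^ 2
            + A p * (2 * (Q p).eval (x p) * (Q p).derivative.eval (x p)) := by
        simp [derivative_mul, derivative_pow]
      rw [hd, hA, hB]
      field_simp [hc p]
      ring
    · intro r _ hr
      have h0 := hQroot p r (Ne.symm hr)
      simp [derivative_mul, derivative_pow, h0]
    · simp
  have hdvd : (∏ p : Fin (n + 1), (X - C (x p)) ^ 2) ∣ (R - 1) := by
    apply Finset.prod_dvd_of_coprime
    · intro p _ q _ hpq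
      exact (Polynomial.isCoprime_X_sub_C_of_isUnit_sub
        ((sub_ne_zero_of_ne (hx p q hpq)).isUnit)).pow
    · intro p _
      exact sq_dvd_of_root_of_deriv_root (by simp [hRe p]) (by simp [hRd p])
  have hdegR : R.natDegree ≤ 2 * n + 1 := by
    refine (natDegree_sum_le _ _).trans ?_
    apply Finset.sup_le
    intro p _
    refine (natDegree_mul_le).trans ?_
    have h1 : (C (A p) + C (B p) * (X - C (x p))).natDegree ≤ 1 := by
      refine (natDegree_add_le _ _).trans ?_
      simp only [natDegree_C]
      refine max_le (by norm_num) ?_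
      refine (natDegree_mul_le).trans ?_
      simp [natDegree_X_sub_C]
    have h2 : ((Q p) ^ 2).natDegree = 2 * n := by
      rw [natDegree_pow, hQdeg p]
    omega
  have hDdeg : (∏ p : Fin (n + 1), (X - C (x p)) ^ 2).natDegree = 2 * (n + 1) := by
    rw [natDegree_prod _ _ fun p _ => pow_ne_zero _ (X_sub_C_ne_zero _)]
    simp [natDegree_pow, natDegree_X_sub_C, two_mul]
    ring
  have hR1 : R = 1 := by
    by_contra h
    have hne : R - 1 ≠ 0 := sub_ne_zero_of_ne h
    have hle := Polynomial.natDegree_le_of_dvd hdvd hne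
    rw [hDdeg] at hle
    have h2 : (R - 1).natDegree ≤ 2 * n + 1 := by
      refine (natDegree_sub_le _ _).trans ?_
      simpa using hdegR
    omega
  have hcoeff : R.coeff (2 * n + 1) = ∑ p : Fin (n + 1), B p := by
    rw [hR, finset_sum_coeff]
    apply Finset.sum_congr rfl
    intro p _
    have hexp : (C (A p) + C (B p) * (X - C (x p))) * (Q p) ^ 2
        = C (A p) * (Q p) ^ 2 + C (B p) * ((X - C (x p)) * (Q p) ^ 2) := by ring
    rw [hexp, coeff_add, coeff_C_mul, coeff_C_mul]
    have hz : ((Q p) ^ 2).coeff (2 * n + 1) = 0 := by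
      apply coeff_eq_zero_of_natDegree_lt
      rw [natDegree_pow, hQdeg p]
      omega
    have hmon : ((X - C (x p)) * (Q p) ^ 2).Monic :=
      (monic_X_sub_C _).mul ((hQmonic p).pow _)
    have hdeg : ((X - C (x p)) * (Q p) ^ 2).natDegree = 2 * n + 1 := by
      rw [natDegree_mul (X_sub_C_ne_zero _) (pow_ne_zero _ (hQmonic p).ne_zero),
        natDegree_X_sub_C, natDegree_pow, hQdeg p]
      omega
    have hm : ((X - C (x p)) * (Q p) ^ 2).coeff (2 * n + 1) = 1 := by
      rw [← hdeg]
      exact hmon.coeff_natDegree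
    rw [hz, hm]
    ring
  have hfinal : ∑ p : Fin (n + 1), B p = 0 := by
    rw [hR1] at hcoeff
    have h0 : (1 : Polynomial ℝ).coeff (2 * n + 1) = 0 := by
      rw [coeff_one]
      simp
    rw [h0] at hcoeff
    exact hcoeff.symm
  calc ∑ p : Fin (n + 1),
      deriv (fun t : ℝ => ∏ q ∈ Finset.univ.erase p, f (t - x q)) (x p)
      = ∑ p : Fin (n + 1), B p := Finset.sum_congr rfl fun p _ => hderiv p
    _ = 0 := hfinal
end

section
/- Let n ≥ 2 be an integer, let a, b, c ∈ ℝ with c ≠ 0, and define f(x) = a + b/sinh²(cx) for x ≠ 0. Then for all x₁,…,x_{n+1} ∈ ℝ with x_p ≠ x_q whenever p ≠ q, one has Σ_{p=1}^{n+1} ∂/∂x_p [ Π_{q≠p} f(x_p − x_q) ] = 0. -/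
open Real Finset Polynomial


lemma sq_dvd_of_root_of_deriv {p : Polynomial ℝ} {t : ℝ}
    (h1 : p.eval t = 0) (h2 : p.derivative.eval t = 0) : (X - C t) ^ 2 ∣ p := by
  obtain ⟨q, hq⟩ := (dvd_iff_isRoot).2 h1
  have hq' : q.eval t = 0 := by
    have := congrArg (fun r => Polynomial.eval t (Polynomial.derivative r)) hq
    simp [derivative_mul] at this
    simpa [this] using h2
  obtain ⟨r, hr⟩ := (dvd_iff_isRoot).2 hq'
  exact ⟨r, by rw [hq, hr]; ring⟩

lemma eval_zero_of_sq_dvd {p : Polynomial ℝ} {t : ℝ} (h : (X - C t) ^ 2 ∣ p) :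
    p.eval t = 0 ∧ p.derivative.eval t = 0 := by
  obtain ⟨q, rfl⟩ := h
  exact ⟨by simp, by simp [derivative_mul, derivative_pow]⟩

lemma derivative_finset_prod {ι : Type*} [DecidableEq ι] (s : Finset ι) (f : ι → Polynomial ℝ) :
    derivative (∏ i ∈ s, f i) = ∑ i ∈ s, (∏ j ∈ s.erase i, f j) * derivative (f i) := by
  induction s using Finset.induction_on with
  | empty => simp
  | insert _ _ h ih =>
    rename_i a s
    rw [Finset.prod_insert h, derivative_mul, ih, Finset.sum_insert h, Finset.erase_insert h]
    rw [Finset.mul_sum]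
    have : ∀ i ∈ s, (∏ j ∈ (insert a s).erase i, f j) * derivative (f i)
        = f a * ((∏ j ∈ s.erase i, f j) * derivative (f i)) := by
      intro i hi
      rw [Finset.erase_insert_of_ne (by rintro rfl; exact h hi), Finset.prod_insert
        (by simp [Finset.mem_erase]; tauto)]
      ring
    rw [Finset.sum_congr rfl this]
    ring

lemma residue_sum (m : ℕ) (u : Fin m → ℝ) (hu : Function.Injective u)
    (hg : ∀ p, u p ^ 2 - 1 ≠ 0) (N : Polynomial ℝ) (hN : N.natDegree ≤ 2 * m) :
    ∑ p, (N.derivative.eval (u p) * (u p ^ 2 - 1) * (∏ q ∈ univ.erase p, (u p - u q))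
        - N.eval (u p) * (2 * u p * (∏ q ∈ univ.erase p, (u p - u q))
          + 2 * (u p ^ 2 - 1) * ∑ r ∈ univ.erase p, ∏ q ∈ (univ.erase p).erase r, (u p - u q)))
      / ((u p ^ 2 - 1) ^ 2 * (∏ q ∈ univ.erase p, (u p - u q)) ^ 3)
    + N.eval 1 / (2 * (∏ q, (1 - u q)) ^ 2)
    - N.eval (-1) / (2 * (∏ q, (-1 - u q)) ^ 2) = 0 := by
  classical
  set vQ : Fin m → ℝ := fun p => ∏ q ∈ univ.erase p, (u p - u q) with hvQdef
  set vQ' : Fin m → ℝ := fun p => ∑ r ∈ univ.erase p, ∏ q ∈ (univ.erase p).erase r, (u p - u q)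
    with hvQ'def
  set Q : Fin m → Polynomial ℝ := fun p => ∏ q ∈ univ.erase p, (X - C (u q)) with hQdef
  set P : Polynomial ℝ := ∏ q, (X - C (u q)) with hPdef
  have hQeval : ∀ p, (Q p).eval (u p) = vQ p := by intro p; simp [hQdef, eval_prod, hvQdef]
  have hQ'eval : ∀ p, ((Q p).derivative).eval (u p) = vQ' p := by
    intro p
    rw [hQdef, derivative_finset_prod]
    simp [eval_finset_sum, eval_prod, hvQ'def]
  have hQeval0 : ∀ p q, p ≠ q → (Q q).eval (u p) = 0 := by
    intro p q hpq
    rw [hQdef]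
    simp only [eval_prod]
    exact Finset.prod_eq_zero (Finset.mem_erase.2 ⟨hpq, Finset.mem_univ p⟩) (by simp)
  have hPeval0 : ∀ p, P.eval (u p) = 0 := by
    intro p
    rw [hPdef]; simp only [eval_prod]
    exact Finset.prod_eq_zero (Finset.mem_univ p) (by simp)
  have hvQ0 : ∀ p, vQ p ≠ 0 := by
    intro p
    rw [hvQdef]
    exact Finset.prod_ne_zero_iff.2 fun q hq =>
      sub_ne_zero.2 fun h => (Finset.mem_erase.1 hq).1 (hu h).symm
  have h1u : ∀ q, (1:ℝ) - u q ≠ 0 := by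
    intro q h
    apply hg q; have : u q = 1 := by linarith [sub_eq_zero.1 h]
    rw [this]; ring
  have hm1u : ∀ q, (-1:ℝ) - u q ≠ 0 := by
    intro q h
    apply hg q; have : u q = -1 := by linarith [sub_eq_zero.1 h]
    rw [this]; ring
  have hP1 : P.eval 1 = ∏ q, (1 - u q) := by simp [hPdef, eval_prod]
  have hPm1 : P.eval (-1) = ∏ q, (-1 - u q) := by simp [hPdef, eval_prod]
  have hP1ne : P.eval 1 ≠ 0 := by rw [hP1]; exact Finset.prod_ne_zero_iff.2 fun q _ => h1u q
  have hPm1ne : P.eval (-1) ≠ 0 := by rw [hPm1]; exact Finset.prod_ne_zero_iff.2 fun q _ => hm1u q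
  set A : Fin m → ℝ := fun p =>
    (N.derivative.eval (u p) * (u p ^ 2 - 1) * vQ p
      - N.eval (u p) * (2 * u p * vQ p + 2 * (u p ^ 2 - 1) * vQ' p))
      / ((u p ^ 2 - 1) ^ 2 * vQ p ^ 3) with hAdef
  set B : Fin m → ℝ := fun p => N.eval (u p) / ((u p ^ 2 - 1) * vQ p ^ 2) with hBdef
  set c1 : ℝ := N.eval 1 / (2 * P.eval 1 ^ 2) with hc1def
  set c2 : ℝ := - N.eval (-1) / (2 * P.eval (-1) ^ 2) with hc2def
  set W : Polynomial ℝ :=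
    (∑ p, (C (A p) * (X - C (u p)) + C (B p)) * ((X ^ 2 - 1) * Q p ^ 2))
    + C c1 * ((X + 1) * P ^ 2) + C c2 * ((X - 1) * P ^ 2) with hWdef
  have hQmonic : ∀ p, (Q p).Monic := fun p =>
    monic_prod_of_monic _ _ fun q _ => monic_X_sub_C _
  have hPmonic : P.Monic := monic_prod_of_monic _ _ fun q _ => monic_X_sub_C _
  have hX2monic : ((X : Polynomial ℝ) ^ 2 - 1).Monic := by
    have := monic_X_pow_sub_C (1 : ℝ) (n := 2) two_ne_zero
    simpa using this
  have hQdeg : ∀ p, (Q p).natDegree = m - 1 := by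
    intro p
    rw [hQdef, natDegree_prod _ _ (fun q _ => (monic_X_sub_C (u q)).ne_zero)]
    simp [Finset.card_erase_of_mem]
  have hPdeg : P.natDegree = m := by
    rw [hPdef, natDegree_prod _ _ (fun q _ => (monic_X_sub_C (u q)).ne_zero)]
    simp
  have key : N = W := by
    have hdvdp : ∀ p, (X - C (u p)) ^ 2 ∣ (N - W) := by
      intro p
      apply sq_dvd_of_root_of_deriv
      · have hWe : W.eval (u p) = B p * ((u p ^ 2 - 1) * vQ p ^ 2) := by
          rw [hWdef]
          simp only [eval_add, eval_mul, eval_finset_sum, eval_pow, eval_sub, eval_one,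
            eval_X, eval_C]
          rw [Finset.sum_eq_single_of_mem p (Finset.mem_univ p)
            (fun q _ hqp => by rw [hQeval0 p q (Ne.symm hqp)]; ring)]
          rw [hQeval, hPeval0]; ring
        rw [eval_sub, hWe]
        simp only [hBdef]
        field_simp [hg p, hvQ0 p]
        ring
      · have hdvdq : ∀ q, q ≠ p →
            (X - C (u p)) ^ 2 ∣ (C (A q) * (X - C (u q)) + C (B q)) * ((X ^ 2 - 1) * Q q ^ 2) := by
          intro q hqp
          have h1 : (X - C (u p)) ∣ Q q :=
            Finset.dvd_prod_of_mem _ (Finset.mem_erase.2 ⟨Ne.symm hqp, Finset.mem_univ p⟩)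
          exact dvd_trans (pow_dvd_pow_of_dvd h1 2)
            (dvd_trans (dvd_mul_left _ _) (dvd_mul_left _ _))
        have hdvdP : (X - C (u p)) ^ 2 ∣ P ^ 2 :=
          pow_dvd_pow_of_dvd (Finset.dvd_prod_of_mem (fun q => X - C (u q)) (Finset.mem_univ p)) 2
        have hpterm : (derivative ((C (A p) * (X - C (u p)) + C (B p))
              * ((X ^ 2 - 1) * Q p ^ 2))).eval (u p)
            = A p * ((u p ^ 2 - 1) * vQ p ^ 2)
              + B p * (2 * u p * vQ p ^ 2 + (u p ^ 2 - 1) * (2 * vQ p * vQ' p)) := by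
          simp only [derivative_mul, derivative_add, derivative_sub, derivative_C,
            derivative_X, derivative_one, derivative_pow, eval_add, eval_mul, eval_sub,
            eval_pow, eval_X, eval_C, eval_one, eval_zero, hQeval, hQ'eval]
          push_cast
          ring
        have hWd : W.derivative.eval (u p)
            = A p * ((u p ^ 2 - 1) * vQ p ^ 2)
              + B p * (2 * u p * vQ p ^ 2 + (u p ^ 2 - 1) * (2 * vQ p * vQ' p)) := by
          have hc1z : (derivative (C c1 * ((X + 1) * P ^ 2))).eval (u p) = 0 :=
            (eval_zero_of_sq_dvd (dvd_trans hdvdP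
              (dvd_trans (dvd_mul_left _ _) (dvd_mul_left _ _)))).2
          have hc2z : (derivative (C c2 * ((X - 1) * P ^ 2))).eval (u p) = 0 :=
            (eval_zero_of_sq_dvd (dvd_trans hdvdP
              (dvd_trans (dvd_mul_left _ _) (dvd_mul_left _ _)))).2
          rw [hWdef, derivative_add, derivative_add, derivative_sum]
          rw [eval_add, eval_add, eval_finset_sum, hc1z, hc2z]
          rw [Finset.sum_eq_single_of_mem p (Finset.mem_univ p)
            (fun q _ hqp => (eval_zero_of_sq_dvd (hdvdq q hqp)).2), hpterm]
          ring
        rw [derivative_sub, eval_sub, hWd]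
        simp only [hAdef, hBdef]
        field_simp [hg p, hvQ0 p]
        ring
    have hdvd1 : (X - C (1:ℝ)) ∣ (N - W) := by
      rw [dvd_iff_isRoot]
      have hW1 : W.eval 1 = c1 * (2 * P.eval 1 ^ 2) := by
        rw [hWdef]
        rw [eval_add, eval_add, eval_finset_sum, Finset.sum_eq_zero
          (fun q _ => by simp)]
        simp only [eval_mul, eval_add, eval_sub, eval_pow, eval_X, eval_C, eval_one]
        ring
      simp only [IsRoot, eval_sub, hW1, hc1def]
      field_simp
      ring
    have hdvdm1 : (X - C (-1:ℝ)) ∣ (N - W) := by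
      rw [dvd_iff_isRoot]
      have hWm1 : W.eval (-1) = c2 * (-2 * P.eval (-1) ^ 2) := by
        rw [hWdef]
        rw [eval_add, eval_add, eval_finset_sum, Finset.sum_eq_zero
          (fun q _ => by simp)]
        simp only [eval_mul, eval_add, eval_sub, eval_pow, eval_X, eval_C, eval_one]
        ring
      simp only [IsRoot, eval_sub, hWm1, hc2def]
      field_simp
      ring
    have hpair : (↑(univ : Finset (Fin m)) : Set (Fin m)).Pairwise
        (Function.onFun IsCoprime fun p => (X - C (u p)) ^ 2) := by
      intro p _ q _ hpq
      exact (pairwise_coprime_X_sub_C hu hpq).pow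
    have hprod : (∏ p, (X - C (u p)) ^ 2) ∣ (N - W) :=
      Finset.prod_dvd_of_coprime hpair fun p _ => hdvdp p
    have hcopm1 : IsCoprime (X - C (-1:ℝ)) (∏ p, (X - C (u p)) ^ 2) :=
      IsCoprime.prod_right fun p _ =>
        (isCoprime_X_sub_C_of_isUnit_sub (isUnit_iff_ne_zero.2 (hm1u p))).pow_right
    have hd2 : ((X - C (-1:ℝ)) * ∏ p, (X - C (u p)) ^ 2) ∣ (N - W) :=
      hcopm1.mul_dvd hdvdm1 hprod
    have hcop1 : IsCoprime (X - C (1:ℝ)) ((X - C (-1:ℝ)) * ∏ p, (X - C (u p)) ^ 2) := by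
      apply IsCoprime.mul_right
      · exact isCoprime_X_sub_C_of_isUnit_sub (by norm_num)
      · exact IsCoprime.prod_right fun p _ =>
          (isCoprime_X_sub_C_of_isUnit_sub (isUnit_iff_ne_zero.2 (h1u p))).pow_right
    have hFdvd : ((X - C (1:ℝ)) * ((X - C (-1:ℝ)) * ∏ p, (X - C (u p)) ^ 2)) ∣ (N - W) :=
      hcop1.mul_dvd hdvd1 hd2
    have hFmonic : ((X - C (1:ℝ)) * ((X - C (-1:ℝ)) * ∏ p, (X - C (u p)) ^ 2)).Monic :=
      (monic_X_sub_C 1).mul ((monic_X_sub_C (-1)).mul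
        (monic_prod_of_monic _ _ fun p _ => (monic_X_sub_C _).pow 2))
    have hFdeg : ((X - C (1:ℝ)) * ((X - C (-1:ℝ)) * ∏ p, (X - C (u p)) ^ 2)).natDegree
        = 2 * m + 2 := by
      rw [(monic_X_sub_C 1).natDegree_mul ((monic_X_sub_C (-1)).mul
        (monic_prod_of_monic _ _ fun p _ => (monic_X_sub_C _).pow 2)),
        (monic_X_sub_C (-1)).natDegree_mul
          (monic_prod_of_monic _ _ fun p _ => (monic_X_sub_C _).pow 2),
        natDegree_prod _ _ (fun q _ => ((monic_X_sub_C (u q)).pow 2).ne_zero)]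
      rw [natDegree_X_sub_C, natDegree_X_sub_C, Finset.sum_congr rfl
        (fun q (_ : q ∈ univ) => by
          rw [(monic_X_sub_C (u q)).natDegree_pow, natDegree_X_sub_C])]
      simp only [Finset.sum_const, Finset.card_univ, Fintype.card_fin, smul_eq_mul]
      omega
    have hsummand : ∀ p : Fin m,
        ((C (A p) * (X - C (u p)) + C (B p)) * ((X ^ 2 - 1) * Q p ^ 2)).natDegree
          ≤ 2 * m + 1 := by
      intro p
      have hp1 : 1 ≤ m := p.pos
      refine le_trans natDegree_mul_le ?_
      have h1 : (C (A p) * (X - C (u p)) + C (B p)).natDegree ≤ 1 :=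
        le_trans (natDegree_add_le _ _) (max_le (le_trans natDegree_mul_le
          (by simp [natDegree_X_sub_C])) (by simp))
      have h2 : (((X : Polynomial ℝ) ^ 2 - 1) * Q p ^ 2).natDegree ≤ 2 * m := by
        refine le_trans natDegree_mul_le ?_
        have h3 : ((X : Polynomial ℝ) ^ 2 - 1).natDegree ≤ 2 := by
          have : ((X : Polynomial ℝ) ^ 2 - 1) = X ^ 2 - C 1 := by simp
          rw [this, natDegree_X_pow_sub_C]
        have h4 : (Q p ^ 2).natDegree ≤ 2 * (m - 1) := by
          rw [(hQmonic p).natDegree_pow, hQdeg p]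
        omega
      omega
    have hWdegle : W.natDegree ≤ 2 * m + 1 := by
      have hP2 : (P ^ 2).natDegree ≤ 2 * m := by
        have := hPmonic.natDegree_pow 2
        rw [hPdeg] at this
        omega
      have hT1 : (C c1 * ((X + 1) * P ^ 2)).natDegree ≤ 2 * m + 1 := by
        refine le_trans natDegree_mul_le ?_
        have h2 : (((X : Polynomial ℝ) + 1) * P ^ 2).natDegree ≤ 2 * m + 1 := by
          refine le_trans natDegree_mul_le ?_
          have hx : ((X : Polynomial ℝ) + 1).natDegree ≤ 1 :=
            le_trans (natDegree_add_le _ _) (by simp)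
          omega
        simp only [natDegree_C]
        omega
      have hT2 : (C c2 * ((X - 1) * P ^ 2)).natDegree ≤ 2 * m + 1 := by
        refine le_trans natDegree_mul_le ?_
        have h2 : (((X : Polynomial ℝ) - 1) * P ^ 2).natDegree ≤ 2 * m + 1 := by
          refine le_trans natDegree_mul_le ?_
          have hx : ((X : Polynomial ℝ) - 1).natDegree ≤ 1 :=
            le_trans (natDegree_sub_le _ _) (by simp)
          omega
        simp only [natDegree_C]
        omega
      rw [hWdef]
      refine le_trans (natDegree_add_le _ _) (max_le (le_trans (natDegree_add_le _ _)
        (max_le (natDegree_sum_le_of_forall_le _ _ fun p _ => hsummand p) hT1)) hT2)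
    by_cases hD0 : N - W = 0
    · exact sub_eq_zero.1 hD0
    · exfalso
      have hle := Polynomial.natDegree_le_of_dvd hFdvd hD0
      rw [hFdeg] at hle
      have hDle : (N - W).natDegree ≤ 2 * m + 1 :=
        le_trans (natDegree_sub_le _ _) (max_le (le_trans hN (by omega)) hWdegle)
      omega
  have hcoeff : N.coeff (2 * m + 1) = (∑ p, A p) + c1 + c2 := by
    have hlinmul : ∀ (aa bb tt : ℝ) (M : Polynomial ℝ), M.Monic → M.natDegree = 2 * m →
        ((C aa * (X - C tt) + C bb) * M).coeff (2 * m + 1) = aa := by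
      intro aa bb tt M hM hMd
      have h1 : C aa * (X - C tt) + C bb = C aa * X + C (bb - aa * tt) := by
        rw [C_sub, C_mul]; ring
      rw [h1, add_mul, coeff_add, mul_assoc, coeff_C_mul, coeff_C_mul, coeff_X_mul]
      have h2 : M.coeff (2 * m) = 1 := by rw [← hMd]; exact hM.coeff_natDegree
      rw [h2, coeff_eq_zero_of_natDegree_lt (by omega : M.natDegree < 2 * m + 1)]
      ring
    conv_lhs => rw [key, hWdef]
    rw [coeff_add, coeff_add, finset_sum_coeff]
    have hsumc : ∀ p ∈ (univ : Finset (Fin m)),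
        ((C (A p) * (X - C (u p)) + C (B p)) * ((X ^ 2 - 1) * Q p ^ 2)).coeff (2 * m + 1)
          = A p := by
      intro p _
      apply hlinmul
      · exact hX2monic.mul ((hQmonic p).pow 2)
      · rw [hX2monic.natDegree_mul ((hQmonic p).pow 2), (hQmonic p).natDegree_pow, hQdeg p]
        have : ((X : Polynomial ℝ) ^ 2 - 1).natDegree = 2 := by
          have h : ((X : Polynomial ℝ) ^ 2 - 1) = X ^ 2 - C 1 := by simp
          rw [h, natDegree_X_pow_sub_C]
        have hp1 : 1 ≤ m := p.pos
        omega
    rw [Finset.sum_congr rfl hsumc]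
    have hc1c : (C c1 * ((X + 1) * P ^ 2)).coeff (2 * m + 1) = c1 := by
      have hM : (((X : Polynomial ℝ) + 1) * P ^ 2).Monic := by
        have : ((X : Polynomial ℝ) + 1) = X + C 1 := by simp
        rw [this]
        exact (monic_X_add_C 1).mul (hPmonic.pow 2)
      have hMd : (((X : Polynomial ℝ) + 1) * P ^ 2).natDegree = 2 * m + 1 := by
        have hX1 : ((X : Polynomial ℝ) + 1) = X + C 1 := by simp
        rw [hX1, (monic_X_add_C (1:ℝ)).natDegree_mul (hPmonic.pow 2), hPmonic.natDegree_pow,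
          hPdeg, natDegree_X_add_C]
        omega
      have h1 : (((X : Polynomial ℝ) + 1) * P ^ 2).coeff (2 * m + 1) = 1 := by
        rw [← hMd]
        exact hM.coeff_natDegree
      rw [coeff_C_mul, h1]
      ring
    have hc2c : (C c2 * ((X - 1) * P ^ 2)).coeff (2 * m + 1) = c2 := by
      have hM : (((X : Polynomial ℝ) - 1) * P ^ 2).Monic := by
        have : ((X : Polynomial ℝ) - 1) = X - C 1 := by simp
        rw [this]
        exact (monic_X_sub_C 1).mul (hPmonic.pow 2)
      have hMd : (((X : Polynomial ℝ) - 1) * P ^ 2).natDegree = 2 * m + 1 := by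
        have hX1 : ((X : Polynomial ℝ) - 1) = X - C 1 := by simp
        rw [hX1, (monic_X_sub_C (1:ℝ)).natDegree_mul (hPmonic.pow 2), hPmonic.natDegree_pow,
          hPdeg, natDegree_X_sub_C]
        omega
      have h1 : (((X : Polynomial ℝ) - 1) * P ^ 2).coeff (2 * m + 1) = 1 := by
        rw [← hMd]
        exact hM.coeff_natDegree
      rw [coeff_C_mul, h1]
      ring
    rw [hc1c, hc2c]
  have hNcoeff : N.coeff (2 * m + 1) = 0 :=
    coeff_eq_zero_of_natDegree_lt (lt_of_le_of_lt hN (by omega))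
  have hsum : (∑ p, A p) + c1 + c2 = 0 := by rw [← hcoeff, hNcoeff]
  calc ∑ p, (N.derivative.eval (u p) * (u p ^ 2 - 1) * (∏ q ∈ univ.erase p, (u p - u q))
        - N.eval (u p) * (2 * u p * (∏ q ∈ univ.erase p, (u p - u q))
          + 2 * (u p ^ 2 - 1) * ∑ r ∈ univ.erase p, ∏ q ∈ (univ.erase p).erase r, (u p - u q)))
      / ((u p ^ 2 - 1) ^ 2 * (∏ q ∈ univ.erase p, (u p - u q)) ^ 3)
    + N.eval 1 / (2 * (∏ q, (1 - u q)) ^ 2)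
    - N.eval (-1) / (2 * (∏ q, (-1 - u q)) ^ 2)
      = (∑ p, A p) + c1 + c2 := by
        rw [hc1def, hc2def, hP1, hPm1]
        ring
    _ = 0 := hsum

-- per-p algebraic transformation
lemma per_p (m : ℕ) (a b c : ℝ) (hb : b ≠ 0) (u : Fin m → ℝ)
    (hu : Function.Injective u) (hg : ∀ p, u p ^ 2 - 1 ≠ 0) (p : Fin m) :
    ∑ r ∈ univ.erase p,
      (2 * b * c * (u p ^ 2 - 1) * (u r ^ 2 - 1) * (u p * u r - 1) / (u p - u r) ^ 3)
        * ∏ q ∈ (univ.erase p).erase r,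
            (a + b * (u p ^ 2 - 1) * (u q ^ 2 - 1) / (u p - u q) ^ 2)
    = (-c / b) *
      ((((∏ q ∈ univ.erase p, (a * (u p - u q) ^ 2 + b * (u q ^ 2 - 1) * (u p ^ 2 - 1)))
            * (2 * b * u p * (u p ^ 2 - 1))
          + b * (u p ^ 2 - 1) ^ 2 * ∑ r ∈ univ.erase p,
            (∏ q ∈ (univ.erase p).erase r,
              (a * (u p - u q) ^ 2 + b * (u q ^ 2 - 1) * (u p ^ 2 - 1)))
              * (a * (2 * (u p - u r)) + b * (u r ^ 2 - 1) * (2 * u p)))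
          * (u p ^ 2 - 1) * (∏ q ∈ univ.erase p, (u p - u q))
        - (b * (u p ^ 2 - 1) ^ 2
            * ∏ q ∈ univ.erase p, (a * (u p - u q) ^ 2 + b * (u q ^ 2 - 1) * (u p ^ 2 - 1)))
          * (2 * u p * (∏ q ∈ univ.erase p, (u p - u q))
            + 2 * (u p ^ 2 - 1) * ∑ r ∈ univ.erase p,
                ∏ q ∈ (univ.erase p).erase r, (u p - u q)))
        / ((u p ^ 2 - 1) ^ 2 * (∏ q ∈ univ.erase p, (u p - u q)) ^ 3)) := by
  classical
  have hsub : ∀ q : Fin m, q ≠ p → u p - u q ≠ 0 :=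
    fun q hq => sub_ne_zero.2 fun e => hq (hu e).symm
  set vQ : ℝ := ∏ q ∈ univ.erase p, (u p - u q) with hvQd
  set K : ℝ := ∏ q ∈ univ.erase p,
    (a * (u p - u q) ^ 2 + b * (u q ^ 2 - 1) * (u p ^ 2 - 1)) with hKd
  set S1 : ℝ := ∑ r ∈ univ.erase p,
    (∏ q ∈ (univ.erase p).erase r,
      (a * (u p - u q) ^ 2 + b * (u q ^ 2 - 1) * (u p ^ 2 - 1)))
      * (a * (2 * (u p - u r)) + b * (u r ^ 2 - 1) * (2 * u p)) with hS1d
  set S2 : ℝ := ∑ r ∈ univ.erase p, ∏ q ∈ (univ.erase p).erase r, (u p - u q) with hS2d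
  have hnum : (K * (2 * b * u p * (u p ^ 2 - 1)) + b * (u p ^ 2 - 1) ^ 2 * S1)
        * (u p ^ 2 - 1) * vQ
      - (b * (u p ^ 2 - 1) ^ 2 * K) * (2 * u p * vQ + 2 * (u p ^ 2 - 1) * S2)
      = b * (u p ^ 2 - 1) ^ 3 * (vQ * S1 - 2 * K * S2) := by ring
  rw [hnum]
  have hdist : vQ * S1 - 2 * K * S2
      = ∑ r ∈ univ.erase p,
          (vQ * ((∏ q ∈ (univ.erase p).erase r,
            (a * (u p - u q) ^ 2 + b * (u q ^ 2 - 1) * (u p ^ 2 - 1)))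
            * (a * (2 * (u p - u r)) + b * (u r ^ 2 - 1) * (2 * u p)))
          - 2 * K * ∏ q ∈ (univ.erase p).erase r, (u p - u q)) := by
    rw [hS1d, hS2d, Finset.mul_sum, Finset.mul_sum, ← Finset.sum_sub_distrib]
  rw [hdist, Finset.mul_sum, Finset.sum_div, Finset.mul_sum]
  refine Finset.sum_congr rfl fun r hr => ?_
  have hrp : r ≠ p := (Finset.mem_erase.1 hr).1
  have hpr : u p - u r ≠ 0 := hsub r hrp
  set Dr : ℝ := ∏ q ∈ (univ.erase p).erase r, (u p - u q) with hDrd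
  have hDr : Dr ≠ 0 := Finset.prod_ne_zero_iff.2
    fun q hq => hsub q (Finset.mem_erase.1 (Finset.mem_erase.1 hq).2).1
  set Pi : ℝ := ∏ q ∈ (univ.erase p).erase r,
    (a + b * (u p ^ 2 - 1) * (u q ^ 2 - 1) / (u p - u q) ^ 2) with hPid
  have hKpr : (∏ q ∈ (univ.erase p).erase r,
      (a * (u p - u q) ^ 2 + b * (u q ^ 2 - 1) * (u p ^ 2 - 1))) = Dr ^ 2 * Pi := by
    rw [hPid, hDrd, ← Finset.prod_pow, ← Finset.prod_mul_distrib]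
    refine Finset.prod_congr rfl fun q hq => ?_
    have hq' : u p - u q ≠ 0 := hsub q (Finset.mem_erase.1 (Finset.mem_erase.1 hq).2).1
    field_simp
  have hvQr : vQ = (u p - u r) * Dr :=
    (Finset.mul_prod_erase _ _ hr).symm
  have hKr : K = (a * (u p - u r) ^ 2 + b * (u r ^ 2 - 1) * (u p ^ 2 - 1))
      * ((∏ q ∈ (univ.erase p).erase r,
        (a * (u p - u q) ^ 2 + b * (u q ^ 2 - 1) * (u p ^ 2 - 1)))) := by
    exact (Finset.mul_prod_erase _ _ hr).symm
  rw [hKpr] at hKr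
  rw [hKpr, hvQr, hKr]
  have hgp := hg p
  field_simp
  ring

lemma core_sum (m : ℕ) (a b c : ℝ) (u : Fin m → ℝ) (hu : Function.Injective u)
    (hg : ∀ p, u p ^ 2 - 1 ≠ 0) :
    ∑ p, ∑ r ∈ univ.erase p,
      (2 * b * c * (u p ^ 2 - 1) * (u r ^ 2 - 1) * (u p * u r - 1) / (u p - u r) ^ 3)
        * ∏ q ∈ (univ.erase p).erase r,
            (a + b * (u p ^ 2 - 1) * (u q ^ 2 - 1) / (u p - u q) ^ 2) = 0 := by
  classical
  rcases eq_or_ne b 0 with hb | hb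
  · subst hb
    simp
  set φ : Fin m → Polynomial ℝ :=
    fun q => C a * (X - C (u q)) ^ 2 + C (b * (u q ^ 2 - 1)) * (X ^ 2 - 1) with hφdef
  set N : Polynomial ℝ := ∏ q, φ q with hNdef
  have hφdeg : ∀ q, (φ q).natDegree ≤ 2 := by
    intro q
    rw [hφdef]
    refine le_trans (natDegree_add_le _ _) (max_le ?_ ?_)
    · refine le_trans natDegree_mul_le ?_
      have : ((X - C (u q)) ^ 2).natDegree = 2 := by
        rw [(monic_X_sub_C (u q)).natDegree_pow, natDegree_X_sub_C]
      simp only [natDegree_C, this]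
      omega
    · refine le_trans natDegree_mul_le ?_
      have : ((X : Polynomial ℝ) ^ 2 - 1).natDegree = 2 := by
        have h : ((X : Polynomial ℝ) ^ 2 - 1) = X ^ 2 - C 1 := by simp
        rw [h, natDegree_X_pow_sub_C]
      simp only [natDegree_C, this]
      omega
  have hNdeg : N.natDegree ≤ 2 * m := by
    rw [hNdef]
    refine le_trans (natDegree_prod_le _ _) ?_
    calc ∑ q : Fin m, (φ q).natDegree ≤ ∑ _q : Fin m, 2 :=
          Finset.sum_le_sum fun q _ => hφdeg q
      _ = 2 * m := by simp [Finset.card_univ, mul_comm]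
  have hsub : ∀ p q : Fin m, q ≠ p → u p - u q ≠ 0 :=
    fun p q hq => sub_ne_zero.2 fun e => hq (hu e).symm
  have hφeval : ∀ p q, (φ q).eval (u p)
      = a * (u p - u q) ^ 2 + b * (u q ^ 2 - 1) * (u p ^ 2 - 1) := by
    intro p q
    simp [hφdef]
  have hφdeval : ∀ p r, ((φ r).derivative).eval (u p)
      = a * (2 * (u p - u r)) + b * (u r ^ 2 - 1) * (2 * u p) := by
    intro p r
    rw [hφdef]
    simp only [derivative_add, derivative_mul, derivative_C, derivative_pow, derivative_X,
      derivative_sub, derivative_one]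
    simp only [eval_add, eval_mul, eval_sub, eval_pow, eval_X, eval_C, eval_one, eval_zero,
      eval_natCast]
    push_cast
    ring
  have hNev : ∀ p, N.eval (u p) = b * (u p ^ 2 - 1) ^ 2
      * ∏ q ∈ univ.erase p, (a * (u p - u q) ^ 2 + b * (u q ^ 2 - 1) * (u p ^ 2 - 1)) := by
    intro p
    rw [hNdef, eval_prod, ← Finset.mul_prod_erase _ _ (Finset.mem_univ p),
      Finset.prod_congr rfl (fun q _ => hφeval p q), hφeval p p]
    ring
  have hN'ev : ∀ p, N.derivative.eval (u p)
      = (∏ q ∈ univ.erase p, (a * (u p - u q) ^ 2 + b * (u q ^ 2 - 1) * (u p ^ 2 - 1)))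
          * (2 * b * u p * (u p ^ 2 - 1))
        + b * (u p ^ 2 - 1) ^ 2 * ∑ r ∈ univ.erase p,
            (∏ q ∈ (univ.erase p).erase r,
              (a * (u p - u q) ^ 2 + b * (u q ^ 2 - 1) * (u p ^ 2 - 1)))
              * (a * (2 * (u p - u r)) + b * (u r ^ 2 - 1) * (2 * u p)) := by
    intro p
    have h1 : N.derivative.eval (u p) = ∑ r,
        (∏ q ∈ univ.erase r, (a * (u p - u q) ^ 2 + b * (u q ^ 2 - 1) * (u p ^ 2 - 1)))
          * (a * (2 * (u p - u r)) + b * (u r ^ 2 - 1) * (2 * u p)) := by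
      rw [hNdef, derivative_finset_prod, eval_finset_sum]
      exact Finset.sum_congr rfl fun r _ => by
        rw [eval_mul, eval_prod, hφdeval p r, Finset.prod_congr rfl (fun q _ => hφeval p q)]
    rw [h1, ← Finset.add_sum_erase _ _ (Finset.mem_univ p), Finset.mul_sum]
    congr 1
    · ring
    · refine Finset.sum_congr rfl fun r hr => ?_
      have hpr : p ∈ univ.erase r :=
        Finset.mem_erase.2 ⟨Ne.symm (Finset.mem_erase.1 hr).1, Finset.mem_univ p⟩
      rw [← Finset.mul_prod_erase _ _ hpr, Finset.erase_right_comm]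
      ring
  have hres' := residue_sum m u hu hg N hNdeg
  have hc1 : N.eval 1 = a ^ m * (∏ q, (1 - u q)) ^ 2 := by
    rw [hNdef, eval_prod, Finset.prod_congr rfl
      (fun q (_ : q ∈ univ) => by simp [hφdef] : ∀ q ∈ univ, (φ q).eval 1 = a * (1 - u q) ^ 2),
      Finset.prod_mul_distrib, ← Finset.prod_pow]
    simp [Finset.card_univ]
  have hcm1 : N.eval (-1) = a ^ m * (∏ q, (-1 - u q)) ^ 2 := by
    rw [hNdef, eval_prod, Finset.prod_congr rfl
      (fun q (_ : q ∈ univ) => by simp [hφdef]; try ring :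
        ∀ q ∈ univ, (φ q).eval (-1) = a * (-1 - u q) ^ 2),
      Finset.prod_mul_distrib, ← Finset.prod_pow]
    simp [Finset.card_univ]
  have h1ne : (∏ q, ((1:ℝ) - u q)) ≠ 0 := Finset.prod_ne_zero_iff.2 fun q _ => by
    intro h
    apply hg q
    have : u q = 1 := by linarith [sub_eq_zero.1 h]
    rw [this]; ring
  have hm1ne : (∏ q, ((-1:ℝ) - u q)) ≠ 0 := Finset.prod_ne_zero_iff.2 fun q _ => by
    intro h
    apply hg q
    have : u q = -1 := by linarith [sub_eq_zero.1 h]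
    rw [this]; ring
  have e1 : N.eval 1 / (2 * (∏ q, (1 - u q)) ^ 2) = a ^ m / 2 := by
    rw [hc1]; field_simp
  have e2 : N.eval (-1) / (2 * (∏ q, (-1 - u q)) ^ 2) = a ^ m / 2 := by
    rw [hcm1]; field_simp
  rw [e1, e2] at hres'
  have hsumA : ∑ p : Fin m,
      (N.derivative.eval (u p) * (u p ^ 2 - 1) * (∏ q ∈ univ.erase p, (u p - u q))
        - N.eval (u p) * (2 * u p * (∏ q ∈ univ.erase p, (u p - u q))
          + 2 * (u p ^ 2 - 1) * ∑ r ∈ univ.erase p, ∏ q ∈ (univ.erase p).erase r, (u p - u q)))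
      / ((u p ^ 2 - 1) ^ 2 * (∏ q ∈ univ.erase p, (u p - u q)) ^ 3) = 0 := by
    linarith
  calc ∑ p, ∑ r ∈ univ.erase p,
      (2 * b * c * (u p ^ 2 - 1) * (u r ^ 2 - 1) * (u p * u r - 1) / (u p - u r) ^ 3)
        * ∏ q ∈ (univ.erase p).erase r,
            (a + b * (u p ^ 2 - 1) * (u q ^ 2 - 1) / (u p - u q) ^ 2)
      = ∑ p : Fin m, (-c / b) *
        ((N.derivative.eval (u p) * (u p ^ 2 - 1) * (∏ q ∈ univ.erase p, (u p - u q))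
        - N.eval (u p) * (2 * u p * (∏ q ∈ univ.erase p, (u p - u q))
          + 2 * (u p ^ 2 - 1) * ∑ r ∈ univ.erase p, ∏ q ∈ (univ.erase p).erase r, (u p - u q)))
      / ((u p ^ 2 - 1) ^ 2 * (∏ q ∈ univ.erase p, (u p - u q)) ^ 3)) := by
        refine Finset.sum_congr rfl fun p _ => ?_
        rw [hNev p, hN'ev p]
        exact per_p m a b c hb u hu hg p
    _ = (-c / b) * ∑ p : Fin m,
        ((N.derivative.eval (u p) * (u p ^ 2 - 1) * (∏ q ∈ univ.erase p, (u p - u q))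
        - N.eval (u p) * (2 * u p * (∏ q ∈ univ.erase p, (u p - u q))
          + 2 * (u p ^ 2 - 1) * ∑ r ∈ univ.erase p, ∏ q ∈ (univ.erase p).erase r, (u p - u q)))
      / ((u p ^ 2 - 1) ^ 2 * (∏ q ∈ univ.erase p, (u p - u q)) ^ 3)) := by
        rw [Finset.mul_sum]
    _ = 0 := by rw [hsumA, mul_zero]




lemma hasDerivAt_f0 (a b c w y : ℝ) (hs : Real.sinh (c * (y - w)) ≠ 0) :
    HasDerivAt (fun t => a + b / Real.sinh (c * (t - w)) ^ 2)
      (-2 * b * c * Real.cosh (c * (y - w)) / Real.sinh (c * (y - w)) ^ 3) y := by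
  have h1 : HasDerivAt (fun t : ℝ => c * (t - w)) c y := by
    simpa using ((hasDerivAt_id y).sub_const w).const_mul c
  have h2 : HasDerivAt (fun t => Real.sinh (c * (t - w)))
      (Real.cosh (c * (y - w)) * c) y := h1.sinh
  have h3 := h2.pow 2
  have h4 := (hasDerivAt_const y b).div h3 (pow_ne_zero 2 hs)
  have h5 := h4.const_add a
  refine h5.congr_deriv ?_
  simp only [Pi.pow_apply]
  field_simp
  ring

lemma deriv_prod_eq (n : ℕ) (a b c : ℝ) (hc : c ≠ 0)
    (f : ℝ → ℝ) (hf : ∀ x : ℝ, x ≠ 0 → f x = a + b / (Real.sinh (c * x)) ^ 2)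
    (x : Fin (n + 1) → ℝ) (hx : ∀ p q, p ≠ q → x p ≠ x q) (p : Fin (n + 1)) :
    deriv (fun t : ℝ => ∏ q ∈ Finset.univ.erase p, f (t - x q)) (x p)
    = ∑ r ∈ Finset.univ.erase p,
        (∏ q ∈ (Finset.univ.erase p).erase r, (a + b / Real.sinh (c * (x p - x q)) ^ 2))
          * (-2 * b * c * Real.cosh (c * (x p - x r)) / Real.sinh (c * (x p - x r)) ^ 3) := by
  classical
  have hne : ∀ q : Fin (n + 1), q ≠ p → x p - x q ≠ 0 :=
    fun q hq => sub_ne_zero.2 (hx p q (Ne.symm hq))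
  have hev : (fun t : ℝ => ∏ q ∈ Finset.univ.erase p, f (t - x q))
      =ᶠ[nhds (x p)] (fun t : ℝ => ∏ q ∈ Finset.univ.erase p,
        (a + b / Real.sinh (c * (t - x q)) ^ 2)) := by
    have hall : ∀ᶠ t in nhds (x p), ∀ q ∈ Finset.univ.erase p, t - x q ≠ 0 := by
      rw [Filter.eventually_all_finset]
      intro q hq
      have : ∀ᶠ t in nhds (x p), t ≠ x q :=
        eventually_ne_nhds (hx p q (Finset.mem_erase.1 hq).1.symm)
      exact this.mono fun t ht => sub_ne_zero.2 ht
    exact hall.mono fun t ht => Finset.prod_congr rfl fun q hq => hf _ (ht q hq)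
  rw [hev.deriv_eq]
  have hd := HasDerivAt.fun_finsetProd (u := Finset.univ.erase p)
    (f := fun q t => a + b / Real.sinh (c * (t - x q)) ^ 2)
    (f' := fun q => -2 * b * c * Real.cosh (c * (x p - x q)) / Real.sinh (c * (x p - x q)) ^ 3)
    (x := x p)
    (fun q hq => hasDerivAt_f0 a b c (x q) (x p)
      (Real.sinh_ne_zero.2 (mul_ne_zero hc (hne q (Finset.mem_erase.1 hq).1))))
  rw [hd.deriv]
  exact Finset.sum_congr rfl fun r hr => by rw [smul_eq_mul]

/-- For every integer `n ≥ 2` and `c ≠ 0`, the function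
`f(x) = a + b/sinh²(cx)` satisfies the Ruijsenaars–Schneider functional
equation at all points with pairwise distinct coordinates. -/
theorem stmt2 (n : ℕ) (hn : 2 ≤ n) (a b c : ℝ) (hc : c ≠ 0)
    (f : ℝ → ℝ) (hf : ∀ x : ℝ, x ≠ 0 → f x = a + b / (Real.sinh (c * x)) ^ 2)
    (x : Fin (n + 1) → ℝ) (hx : ∀ p q, p ≠ q → x p ≠ x q) :
    ∑ p : Fin (n + 1),
      deriv (fun t : ℝ => ∏ q ∈ Finset.univ.erase p, f (t - x q)) (x p) = 0 := by
  classical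
  obtain ⟨T, hT⟩ := Infinite.exists_notMem_finset (Finset.image (fun p => -(x p)) univ)
  have hxT : ∀ p, x p + T ≠ 0 := by
    intro p h
    exact hT (Finset.mem_image.2 ⟨p, Finset.mem_univ p, by linarith⟩)
  set y : Fin (n + 1) → ℝ := fun p => c * (x p + T) with hy
  set u : Fin (n + 1) → ℝ := fun p => Real.cosh (y p) / Real.sinh (y p) with hudef
  have hyne : ∀ p, y p ≠ 0 := fun p => mul_ne_zero hc (hxT p)
  have hs : ∀ p, Real.sinh (y p) ≠ 0 := fun p => Real.sinh_ne_zero.2 (hyne p)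
  have hypq : ∀ p q, p ≠ q → y p ≠ y q := by
    intro p q h e
    rw [hy] at e
    exact hx p q h (by have := mul_left_cancel₀ hc e; linarith)
  have hcxy : ∀ p q, c * (x p - x q) = y p - y q := by
    intro p q
    rw [hy]
    ring
  have hgp : ∀ p, u p ^ 2 - 1 = 1 / Real.sinh (y p) ^ 2 := by
    intro p
    have hcs := Real.cosh_sq (y p)
    rw [hudef]
    have h1 := hs p
    field_simp
    try linarith
  have hgne : ∀ p, u p ^ 2 - 1 ≠ 0 := fun p => by
    rw [hgp p]
    exact one_div_ne_zero (pow_ne_zero 2 (hs p))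
  have hsinh_sub : ∀ p q, Real.sinh (y p - y q)
      = Real.sinh (y p) * Real.sinh (y q) * (u q - u p) := by
    intro p q
    rw [Real.sinh_sub, hudef]
    have h1 := hs p
    have h2 := hs q
    field_simp
    try ring
  have hcosh_sub : ∀ p q, Real.cosh (y p - y q)
      = Real.sinh (y p) * Real.sinh (y q) * (u p * u q - 1) := by
    intro p q
    rw [Real.cosh_sub, hudef]
    have h1 := hs p
    have h2 := hs q
    field_simp
    try ring
  have huinj : Function.Injective u := by
    intro p q h
    by_contra hne
    have h0 : Real.sinh (y p - y q) ≠ 0 := Real.sinh_ne_zero.2 (sub_ne_zero.2 (hypq p q hne))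
    rw [hsinh_sub p q, h, sub_self, mul_zero] at h0
    exact h0 rfl
  have husub : ∀ p q, p ≠ q → u p - u q ≠ 0 :=
    fun p q h => sub_ne_zero.2 fun e => h (huinj e)
  have hfac : ∀ p q : Fin (n + 1), p ≠ q →
      a + b / Real.sinh (c * (x p - x q)) ^ 2
      = a + b * (u p ^ 2 - 1) * (u q ^ 2 - 1) / (u p - u q) ^ 2 := by
    intro p q hpq
    rw [hcxy, hsinh_sub p q, hgp p, hgp q]
    have h1 := hs p
    have h2 := hs q
    have h3 := husub p q hpq
    have h4 : u q - u p ≠ 0 := fun e => h3 (by linarith [sub_eq_zero.1 e])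
    field_simp
    ring
  have hdfac : ∀ p r : Fin (n + 1), p ≠ r →
      -2 * b * c * Real.cosh (c * (x p - x r)) / Real.sinh (c * (x p - x r)) ^ 3
      = 2 * b * c * (u p ^ 2 - 1) * (u r ^ 2 - 1) * (u p * u r - 1) / (u p - u r) ^ 3 := by
    intro p r hpr
    rw [hcxy, hsinh_sub p r, hcosh_sub p r, hgp p, hgp r]
    have h1 := hs p
    have h2 := hs r
    have h3 := husub p r hpr
    have h4 : u r - u p ≠ 0 := fun e => h3 (by linarith [sub_eq_zero.1 e])
    field_simp
    ring
  calc ∑ p : Fin (n + 1),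
      deriv (fun t : ℝ => ∏ q ∈ Finset.univ.erase p, f (t - x q)) (x p)
      = ∑ p : Fin (n + 1), ∑ r ∈ univ.erase p,
          (2 * b * c * (u p ^ 2 - 1) * (u r ^ 2 - 1) * (u p * u r - 1) / (u p - u r) ^ 3)
            * ∏ q ∈ (univ.erase p).erase r,
                (a + b * (u p ^ 2 - 1) * (u q ^ 2 - 1) / (u p - u q) ^ 2) := by
        refine Finset.sum_congr rfl fun p _ => ?_
        rw [deriv_prod_eq n a b c hc f hf x hx p]
        refine Finset.sum_congr rfl fun r hr => ?_
        have hpr : p ≠ r := Ne.symm (Finset.mem_erase.1 hr).1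
        rw [hdfac p r hpr, Finset.prod_congr rfl (fun q hq => hfac p q
          (Ne.symm (Finset.mem_erase.1 (Finset.mem_erase.1 hq).2).1))]
        ring
    _ = 0 := core_sum (n + 1) a b c u huinj hgne
end

section
/- Let n ≥ 2 be an integer, let a, b, c ∈ ℝ with c ≠ 0, and define f(x) = a + b/sin²(cx) for x with sin(cx) ≠ 0. Then for all x₁,…,x_{n+1} ∈ ℝ such that c(x_p − x_q) is not an integer multiple of π whenever p ≠ q, one has Σ_{p=1}^{n+1} ∂/∂x_p [ Π_{q≠p} f(x_p − x_q) ] = 0. -/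
open Real Finset

section RSAux
open Polynomial

lemma KL {m : ℕ} (τ : ℂ) (z : Fin m → ℂ) (hz : Function.Injective z) (h0 : ∀ p, z p ≠ 0) :
    (1 - τ) * ∑ p : Fin m, ∏ q ∈ Finset.univ.erase p, ((z p - τ * z q) / (z p - z q))
      = 1 - τ ^ m := by
  rcases Nat.eq_zero_or_pos m with hm | hm
  · subst hm; simp
  obtain ⟨k, rfl⟩ : ∃ k, m = k + 1 := ⟨m - 1, (Nat.succ_pred_eq_of_pos hm).symm⟩
  set v : Fin (k+1) → ℂ := fun p => ∏ q ∈ Finset.univ.erase p, (z p - τ * z q) with hv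
  set w : Fin (k+1) → ℂ := fun p => ∏ q ∈ Finset.univ.erase p, (z p - z q) with hw
  have hwne : ∀ p, w p ≠ 0 := by
    intro p
    refine Finset.prod_ne_zero_iff.2 fun q hq => sub_ne_zero.2 fun h => ?_
    exact (Finset.mem_erase.1 hq).1 (hz h).symm
  have hprod : ∀ p : Fin (k+1), ∏ q ∈ Finset.univ.erase p, ((z p - τ * z q) / (z p - z q))
      = v p / w p := by
    intro p; rw [Finset.prod_div_distrib]
  set S : ℂ[X] := ∑ p : Fin (k+1), C (v p / w p) * ∏ q ∈ Finset.univ.erase p, (X - C (z q)) with hS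
  set Q : ℂ[X] := (∏ q : Fin (k+1), (X - C (τ * z q)))
      - C (τ ^ (k+1)) * (∏ q : Fin (k+1), (X - C (z q)))
      - C (1 - τ) * X * S with hQ
  have hdegS : S.natDegree ≤ k := by
    refine Polynomial.natDegree_sum_le_of_forall_le _ _ fun p _ => ?_
    refine le_trans (Polynomial.natDegree_mul_le) ?_
    simp only [Polynomial.natDegree_C, zero_add]
    refine le_trans (Polynomial.natDegree_prod_le _ _) ?_
    have : ∀ q ∈ Finset.univ.erase p, (X - C (z q)).natDegree = 1 := fun q _ =>
      Polynomial.natDegree_X_sub_C _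
    rw [Finset.sum_congr rfl this, Finset.sum_const, smul_eq_mul, mul_one]
    simp [Finset.card_erase_of_mem]
  have hmonic1 : (∏ q : Fin (k+1), (X - C (τ * z q))).Monic :=
    monic_prod_of_monic _ _ fun q _ => monic_X_sub_C _
  have hmonic2 : (∏ q : Fin (k+1), (X - C (z q))).Monic :=
    monic_prod_of_monic _ _ fun q _ => monic_X_sub_C _
  have hdeg1 : (∏ q : Fin (k+1), (X - C (τ * z q))).natDegree = k + 1 := by
    rw [Polynomial.natDegree_prod_of_monic _ _ fun q _ => monic_X_sub_C _]
    have : ∀ q ∈ (Finset.univ : Finset (Fin (k+1))), (X - C (τ * z q)).natDegree = 1 :=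
      fun q _ => Polynomial.natDegree_X_sub_C _
    rw [Finset.sum_congr rfl this, Finset.sum_const, smul_eq_mul, mul_one, Finset.card_univ,
      Fintype.card_fin]
  have hdeg2 : (∏ q : Fin (k+1), (X - C (z q))).natDegree = k + 1 := by
    rw [Polynomial.natDegree_prod_of_monic _ _ fun q _ => monic_X_sub_C _]
    have : ∀ q ∈ (Finset.univ : Finset (Fin (k+1))), (X - C (z q)).natDegree = 1 :=
      fun q _ => Polynomial.natDegree_X_sub_C _
    rw [Finset.sum_congr rfl this, Finset.sum_const, smul_eq_mul, mul_one, Finset.card_univ,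
      Fintype.card_fin]
  have hdegQ : Q.natDegree < k + 2 := by
    have h3 : (C (1 - τ) * X * S).natDegree ≤ k + 1 := by
      refine le_trans (Polynomial.natDegree_mul_le) ?_
      have : (C (1 - τ) * X).natDegree ≤ 1 :=
        le_trans Polynomial.natDegree_mul_le (by simp)
      omega
    refine Nat.lt_succ_of_le ?_
    refine le_trans (Polynomial.natDegree_sub_le _ _) ?_
    refine max_le (le_trans (Polynomial.natDegree_sub_le _ _) (max_le ?_ ?_)) h3
    · exact hdeg1.le
    · exact le_trans Polynomial.natDegree_mul_le (by simp [hdeg2])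
  have hevalz : ∀ i : Fin (k+1), Q.eval (z i) = 0 := by
    intro i
    have e1 : (∏ q : Fin (k+1), (X - C (τ * z q))).eval (z i) = (z i - τ * z i) * v i := by
      rw [Polynomial.eval_prod, ← Finset.mul_prod_erase _ _ (Finset.mem_univ i)]
      simp [hv]
    have e2 : (∏ q : Fin (k+1), (X - C (z q))).eval (z i) = 0 := by
      rw [Polynomial.eval_prod]
      exact Finset.prod_eq_zero (Finset.mem_univ i) (by simp)
    have e3 : S.eval (z i) = v i := by
      rw [hS, Polynomial.eval_finset_sum]
      rw [Finset.sum_eq_single i]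
      · simp only [Polynomial.eval_mul, Polynomial.eval_C, Polynomial.eval_prod,
          Polynomial.eval_sub, Polynomial.eval_X]
        rw [show ∏ q ∈ Finset.univ.erase i, (z i - z q) = w i from rfl,
          div_mul_cancel₀ _ (hwne i)]
      · intro p _ hpi
        have : i ∈ Finset.univ.erase p :=
          Finset.mem_erase.2 ⟨fun h => hpi h.symm, Finset.mem_univ i⟩
        simp only [Polynomial.eval_mul, Polynomial.eval_prod]
        rw [Finset.prod_eq_zero this (by simp)]
        ring
      · intro h; exact absurd (Finset.mem_univ i) h
    simp only [hQ, Polynomial.eval_sub, Polynomial.eval_mul, Polynomial.eval_C, Polynomial.eval_X,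
      e1, e2, e3]
    ring
  have heval0 : Q.eval 0 = 0 := by
    have e1 : (∏ q : Fin (k+1), (X - C (τ * z q))).eval 0 = (-τ)^(k+1) * ∏ q : Fin (k+1), z q := by
      rw [Polynomial.eval_prod]
      have : ∀ q ∈ (Finset.univ : Finset (Fin (k+1))),
          (X - C (τ * z q)).eval 0 = (-τ) * z q := by intro q _; simp
      rw [Finset.prod_congr rfl this, Finset.prod_mul_distrib, Finset.prod_const]
      simp
    have e2 : (∏ q : Fin (k+1), (X - C (z q))).eval 0 = (-1:ℂ)^(k+1) * ∏ q : Fin (k+1), z q := by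
      rw [Polynomial.eval_prod]
      have : ∀ q ∈ (Finset.univ : Finset (Fin (k+1))),
          (X - C (z q)).eval 0 = (-1) * z q := by intro q _; simp
      rw [Finset.prod_congr rfl this, Finset.prod_mul_distrib, Finset.prod_const]
      simp
    simp only [hQ, Polynomial.eval_sub, Polynomial.eval_mul, Polynomial.eval_C, Polynomial.eval_X,
      e1, e2, mul_zero, zero_mul, sub_zero]
    rw [neg_pow]
    ring
  have hQ0 : Q = 0 := by
    refine Polynomial.eq_zero_of_natDegree_lt_card_of_eval_eq_zero' Q
      (insert 0 (Finset.univ.image z)) ?_ ?_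
    · intro i hi
      rcases Finset.mem_insert.1 hi with rfl | hi
      · exact heval0
      · obtain ⟨p, -, rfl⟩ := Finset.mem_image.1 hi
        exact hevalz p
    · have h0img : (0:ℂ) ∉ Finset.univ.image z := by
        simp only [Finset.mem_image]; rintro ⟨p, -, hp⟩; exact h0 p hp
      rw [Finset.card_insert_of_notMem h0img, Finset.card_image_of_injective _ hz]
      simpa using Nat.le_of_lt_succ hdegQ
  have hcoeff := congrArg (fun P : ℂ[X] => P.coeff (k+1)) hQ0
  simp only [hQ, Polynomial.coeff_sub, Polynomial.coeff_zero] at hcoeff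
  have c1 : (∏ q : Fin (k+1), (X - C (τ * z q))).coeff (k+1) = 1 := by
    have := hmonic1.coeff_natDegree; rwa [hdeg1] at this
  have c2 : (C (τ ^ (k+1)) * ∏ q : Fin (k+1), (X - C (z q))).coeff (k+1) = τ ^ (k+1) := by
    rw [Polynomial.coeff_C_mul]
    have := hmonic2.coeff_natDegree; rw [hdeg2] at this; rw [this, mul_one]
  have c3 : (C (1 - τ) * X * S).coeff (k+1) = (1 - τ) * S.coeff k := by
    rw [mul_assoc, Polynomial.coeff_C_mul]
    congr 1
    exact Polynomial.coeff_X_mul _ _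
  have cS : S.coeff k = ∑ p : Fin (k+1), v p / w p := by
    rw [hS, Polynomial.finset_sum_coeff]
    congr 1; ext p
    rw [Polynomial.coeff_C_mul]
    have hmon : (∏ q ∈ Finset.univ.erase p, (X - C (z q))).Monic :=
      monic_prod_of_monic _ _ fun q _ => monic_X_sub_C _
    have hdeg : (∏ q ∈ Finset.univ.erase p, (X - C (z q))).natDegree = k := by
      rw [Polynomial.natDegree_prod_of_monic _ _ fun q _ => monic_X_sub_C _]
      have : ∀ q ∈ Finset.univ.erase p, (X - C (z q)).natDegree = 1 :=
        fun q _ => Polynomial.natDegree_X_sub_C _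
      rw [Finset.sum_congr rfl this, Finset.sum_const, smul_eq_mul, mul_one]
      simp [Finset.card_erase_of_mem]
    have := hmon.coeff_natDegree
    rw [hdeg] at this
    rw [this, mul_one]
  rw [c1, c2, c3, cS] at hcoeff
  have key : (1:ℂ) - τ ^ (k+1) - (1 - τ) * ∑ p : Fin (k+1), v p / w p = 0 := by
    linear_combination hcoeff
  calc (1 - τ) * ∑ p : Fin (k+1), ∏ q ∈ Finset.univ.erase p, ((z p - τ * z q) / (z p - z q))
      = (1 - τ) * ∑ p : Fin (k+1), v p / w p := by
        rw [Finset.sum_congr rfl fun p _ => hprod p]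
    _ = 1 - τ ^ (k+1) := by linear_combination -key

end RSAux

noncomputable def Efun (c : ℝ) (u : ℝ) : ℂ := Complex.exp ((2 * c * u : ℝ) * Complex.I)

lemma Efun_ne_zero (c u : ℝ) : Efun c u ≠ 0 := Complex.exp_ne_zero _

lemma continuous_Efun (c : ℝ) : Continuous (Efun c) := by
  unfold Efun
  exact Complex.continuous_exp.comp ((Complex.continuous_ofReal.comp (by continuity)).mul
    continuous_const)


lemma sin_sq (c u v : ℝ) :
    ((Real.sin (c * (u - v)) : ℝ) : ℂ) ^ 2
      = -(Efun c u - Efun c v) ^ 2 / (4 * Efun c u * Efun c v) := by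
  set A := Complex.exp (((c * u : ℝ) : ℂ) * Complex.I) with hA
  set B := Complex.exp (((c * v : ℝ) : ℂ) * Complex.I) with hB
  have hAne : A ≠ 0 := Complex.exp_ne_zero _
  have hBne : B ≠ 0 := Complex.exp_ne_zero _
  have hEu : Efun c u = A ^ 2 := by
    rw [Efun, hA, ← Complex.exp_nat_mul]
    congr 1
    push_cast
    ring
  have hEv : Efun c v = B ^ 2 := by
    rw [Efun, hB, ← Complex.exp_nat_mul]
    congr 1
    push_cast
    ring
  have h1 : Complex.exp (((c * (u - v) : ℝ) : ℂ) * Complex.I) = A / B := by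
    rw [hA, hB, ← Complex.exp_sub]
    congr 1
    push_cast
    ring
  have h2 : Complex.exp (-((c * (u - v) : ℝ) : ℂ) * Complex.I) = B / A := by
    rw [neg_mul, Complex.exp_neg, h1, inv_div]
  rw [Complex.ofReal_sin, Complex.sin, h1, h2, hEu, hEv]
  have hI := Complex.I_sq
  field_simp
  ring_nf
  rw [Complex.I_sq]
  ring

lemma Efun_ne {c u v : ℝ} (h : Real.sin (c * (u - v)) ≠ 0) : Efun c u ≠ Efun c v := by
  intro he
  apply h
  have h2 := sin_sq c u v
  rw [he, sub_self] at h2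
  have h3 : ((Real.sin (c * (u - v)) : ℝ) : ℂ) ^ 2 = 0 := by rw [h2]; simp
  have : ((Real.sin (c * (u - v)) : ℝ) : ℂ) = 0 :=
    pow_eq_zero_iff (n := 2) (by norm_num) |>.1 h3
  exact_mod_cast this

noncomputable def eta (c : ℝ) (τ : ℂ) (u v : ℝ) : ℂ :=
  (Efun c u - τ * Efun c v) / (Efun c u - Efun c v)

noncomputable def etad (c : ℝ) (τ : ℂ) (u v : ℝ) : ℂ :=
  2 * c * Complex.I * (τ - 1) * Efun c u * Efun c v / (Efun c u - Efun c v) ^ 2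

lemma hasDerivAt_Efun (c : ℝ) (u : ℝ) :
    HasDerivAt (Efun c) ((2 * c) * Complex.I * Efun c u) u := by
  have h1 : HasDerivAt (fun s : ℝ => ((2 * c * s : ℝ) : ℂ)) ((2 * c : ℝ) : ℂ) u := by
    have : HasDerivAt (fun s : ℝ => 2 * c * s) (2 * c) u := by
      simpa using (hasDerivAt_id u).const_mul (2 * c)
    exact this.ofReal_comp
  have h2 : HasDerivAt (fun s : ℝ => ((2 * c * s : ℝ) : ℂ) * Complex.I)
      (((2 * c : ℝ) : ℂ) * Complex.I) u := h1.mul_const _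
  have h3 := h2.cexp
  have he : Efun c = fun s : ℝ => Complex.exp (((2 * c * s : ℝ) : ℂ) * Complex.I) := rfl
  rw [he]
  convert h3 using 1
  show (2 * c) * Complex.I * Efun c u
      = Complex.exp (((2 * c * u : ℝ) : ℂ) * Complex.I) * (((2 * c : ℝ) : ℂ) * Complex.I)
  rw [show Efun c u = Complex.exp (((2 * c * u : ℝ) : ℂ) * Complex.I) from rfl]
  push_cast
  ring

lemma hasDerivAt_eta_fst (c : ℝ) (τ : ℂ) {u v : ℝ} (h : Efun c u ≠ Efun c v) :
    HasDerivAt (fun s => eta c τ s v) (etad c τ u v) u := by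
  have hne := sub_ne_zero.2 h
  have hnum : HasDerivAt (fun s => Efun c s - τ * Efun c v) ((2 * c) * Complex.I * Efun c u) u :=
    (hasDerivAt_Efun c u).sub_const _
  have hden : HasDerivAt (fun s => Efun c s - Efun c v) ((2 * c) * Complex.I * Efun c u) u :=
    (hasDerivAt_Efun c u).sub_const _
  have := hnum.fun_div hden hne
  refine this.congr_deriv ?_
  rw [etad]
  field_simp
  ring

lemma hasDerivAt_eta_snd (c : ℝ) (τ : ℂ) {u v : ℝ} (h : Efun c u ≠ Efun c v) :
    HasDerivAt (fun s => eta c τ u s) (-etad c τ u v) v := by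
  have hne := sub_ne_zero.2 h
  have hnum : HasDerivAt (fun s => Efun c u - τ * Efun c s)
      (-(τ * ((2 * c) * Complex.I * Efun c v))) v :=
    (((hasDerivAt_Efun c v).const_mul τ).const_sub _)
  have hden : HasDerivAt (fun s => Efun c u - Efun c s) (-((2 * c) * Complex.I * Efun c v)) v :=
    ((hasDerivAt_Efun c v).const_sub _)
  have := hnum.fun_div hden hne
  refine this.congr_deriv ?_
  rw [etad]
  field_simp
  ring

lemma eta_cancel (c : ℝ) {τ : ℂ} (hτ : τ ≠ 0) {u v : ℝ} (h : Efun c u ≠ Efun c v) :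
    etad c τ u v * eta c τ⁻¹ v u + eta c τ u v * etad c τ⁻¹ v u = 0 := by
  have hne := sub_ne_zero.2 h
  have hne' : Efun c v - Efun c u ≠ 0 := sub_ne_zero.2 h.symm
  rw [eta, eta, etad, etad]
  field_simp
  ring

lemma eta_factor (c : ℝ) {τ : ℂ} (hτ : τ ≠ 0) (α b : ℝ)
    (hq : (α : ℂ) * τ ^ 2 + α = (2 * α + 4 * b) * τ)
    {u v : ℝ} (h : Real.sin (c * (u - v)) ≠ 0) :
    ((α + b / (Real.sin (c * (u - v))) ^ 2 : ℝ) : ℂ) = α * eta c τ u v * eta c τ⁻¹ u v := by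
  have hE := Efun_ne h
  have hne := sub_ne_zero.2 hE
  have hsc : ((Real.sin (c * (u - v)) : ℝ) : ℂ) ≠ 0 := by exact_mod_cast h
  have hss := sin_sq c u v
  rw [eta, eta]
  have key : (α:ℂ) * ((Efun c u - τ * Efun c v) * (Efun c u - τ⁻¹ * Efun c v))
      = α * (Efun c u - Efun c v)^2 - 4*b*(Efun c u * Efun c v) := by
    field_simp
    linear_combination (-(Efun c u * Efun c v)) * hq
  have hrhs : (α:ℂ) * ((Efun c u - τ * Efun c v) / (Efun c u - Efun c v))
        * ((Efun c u - τ⁻¹ * Efun c v) / (Efun c u - Efun c v))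
      = (α * (Efun c u - Efun c v)^2 - 4*b*(Efun c u * Efun c v))
        / (Efun c u - Efun c v)^2 := by
    rw [← key]
    field_simp
  push_cast [← Complex.ofReal_sin]
  rw [hss, hrhs]
  have h4 : (4 : ℂ) * Efun c u * Efun c v ≠ 0 := by
    simp [Efun_ne_zero]
  field_simp
  ring

lemma Ilem {m : ℕ} (c : ℝ) {τ : ℂ} (hτ : τ ≠ 1) (x : Fin m → ℝ)
    (hE : ∀ p q : Fin m, p ≠ q → Efun c (x p) ≠ Efun c (x q)) (j : Fin m) :
    ∑ r ∈ Finset.univ.erase j,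
        (∏ q ∈ (Finset.univ.erase j).erase r, eta c τ (x j) (x q)) * etad c τ (x j) (x r)
      = ∑ p ∈ Finset.univ.erase j,
        (∏ q ∈ (Finset.univ.erase p).erase j, eta c τ (x p) (x q)) * etad c τ (x p) (x j) := by
  classical
  -- the perturbed sum
  set F : ℝ → ℂ := fun s =>
    ∑ p : Fin m, ∏ q ∈ Finset.univ.erase p,
      eta c τ (Function.update x j s p) (Function.update x j s q) with hF
  -- eventually, the perturbed points are still "distinct"
  have hev : ∀ᶠ s in nhds (x j), ∀ i : Fin m, i ≠ j → Efun c s ≠ Efun c (x i) := by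
    rw [Filter.eventually_all]
    intro i
    by_cases hij : i = j
    · subst hij; filter_upwards with s h; exact absurd rfl h
    · have h1 : ContinuousAt (Efun c) (x j) := (continuous_Efun c).continuousAt
      have h2 := h1.eventually_ne (hE j i (fun h => hij h.symm))
      filter_upwards [h2] with s hs _
      exact hs
  -- eventually (1 - τ) * F s = 1 - τ ^ m
  have hconst : (fun s => (1 - τ) * F s) =ᶠ[nhds (x j)] fun _ => 1 - τ ^ m := by
    filter_upwards [hev] with s hs
    have hinj : Function.Injective (fun i => Efun c (Function.update x j s i)) := by
      intro i i' h
      dsimp only at h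
      by_contra hne
      by_cases hij : i = j
      · subst hij
        rw [Function.update_self, Function.update_of_ne (fun hh => hne hh.symm)] at h
        exact hs i' (fun hh => hne hh.symm) h
      · by_cases hij' : i' = j
        · subst hij'
          rw [Function.update_self, Function.update_of_ne hij] at h
          exact hs i hij h.symm
        · rw [Function.update_of_ne hij, Function.update_of_ne hij'] at h
          exact hE i i' hne h
    have := KL τ (fun i => Efun c (Function.update x j s i)) hinj
      (fun p => Efun_ne_zero _ _)
    rw [hF]
    simpa [eta] using this
  -- derivative of F at x j
  set Dp : Fin m → ℂ := fun p => if p = j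
    then ∑ r ∈ Finset.univ.erase j,
        (∏ q ∈ (Finset.univ.erase j).erase r, eta c τ (x j) (x q)) * etad c τ (x j) (x r)
    else (∏ q ∈ (Finset.univ.erase p).erase j, eta c τ (x p) (x q))
        * (-etad c τ (x p) (x j)) with hDp
  have hG : ∀ p : Fin m, HasDerivAt (fun s =>
      ∏ q ∈ Finset.univ.erase p,
        eta c τ (Function.update x j s p) (Function.update x j s q)) (Dp p) (x j) := by
    intro p
    by_cases hpj : p = j
    · subst hpj
      have hfun : (fun s => ∏ q ∈ Finset.univ.erase p,
          eta c τ (Function.update x p s p) (Function.update x p s q))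
          = fun s => ∏ q ∈ Finset.univ.erase p, eta c τ s (x q) := by
        funext s
        refine Finset.prod_congr rfl fun q hq => ?_
        rw [Function.update_self, Function.update_of_ne (Finset.mem_erase.1 hq).1]
      rw [hfun]
      simp only [hDp, reduceIte]
      have hd := HasDerivAt.fun_finsetProd (u := Finset.univ.erase p)
        (f := fun q s => eta c τ s (x q)) (f' := fun q => etad c τ (x p) (x q))
        (x := x p)
        (fun q hq => hasDerivAt_eta_fst c τ (hE p q (fun h => (Finset.mem_erase.1 hq).1 h.symm)))
      simpa [smul_eq_mul, mul_comm] using hd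
    · have hfun : (fun s => ∏ q ∈ Finset.univ.erase p,
          eta c τ (Function.update x j s p) (Function.update x j s q))
          = fun s => ∏ q ∈ Finset.univ.erase p, eta c τ (x p) (Function.update x j s q) := by
        funext s
        refine Finset.prod_congr rfl fun q hq => ?_
        rw [Function.update_of_ne hpj]
      rw [hfun]
      simp only [hDp]
      rw [if_neg hpj]
      have hd := HasDerivAt.fun_finsetProd (u := Finset.univ.erase p)
        (f := fun q s => eta c τ (x p) (Function.update x j s q))
        (f' := fun q => if q = j then -etad c τ (x p) (x j) else 0)
        (x := x j) ?_
      · have hval : ∑ i ∈ Finset.univ.erase p,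
            (∏ q ∈ (Finset.univ.erase p).erase i,
              eta c τ (x p) (Function.update x j (x j) q))
              • (if i = j then -etad c τ (x p) (x j) else 0)
            = (∏ q ∈ (Finset.univ.erase p).erase j, eta c τ (x p) (x q))
              * (-etad c τ (x p) (x j)) := by
          rw [Finset.sum_eq_single j]
          · rw [if_pos rfl, Function.update_eq_self, smul_eq_mul]
          · intro i _ hij
            rw [if_neg hij, smul_zero]
          · intro hj
            exact absurd (Finset.mem_erase.2 ⟨fun h => hpj h.symm, Finset.mem_univ j⟩) hj
        rw [← hval]
        exact hd
      · intro q hq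
        show HasDerivAt (fun s => eta c τ (x p) (Function.update x j s q)) _ (x j)
        by_cases hqj : q = j
        · rw [if_pos hqj]
          have hfun2 : (fun s => eta c τ (x p) (Function.update x j s q))
              = fun s => eta c τ (x p) s := by
            funext s; rw [hqj, Function.update_self]
          rw [hfun2]
          exact hasDerivAt_eta_snd c τ (hE p j hpj)
        · rw [if_neg hqj]
          have hfun2 : (fun s => eta c τ (x p) (Function.update x j s q))
              = fun _ => eta c τ (x p) (x q) := by
            funext s; rw [Function.update_of_ne hqj]
          rw [hfun2]
          exact hasDerivAt_const _ _
  have hFd : HasDerivAt F (∑ p : Fin m, Dp p) (x j) := HasDerivAt.fun_sum fun p _ => hG p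
  have h0 : HasDerivAt (fun s => (1 - τ) * F s) 0 (x j) :=
    (hasDerivAt_const (x j) ((1:ℂ) - τ ^ m)).congr_of_eventuallyEq hconst
  have h1 := HasDerivAt.const_mul (1 - τ) hFd
  have h2 := h1.unique h0
  have h3 : (1 - τ) ≠ 0 := sub_ne_zero.2 (fun h => hτ h.symm)
  have h4 := (mul_eq_zero.1 h2).resolve_left h3
  have hsplit : ∑ p : Fin m, Dp p
      = (∑ r ∈ Finset.univ.erase j,
          (∏ q ∈ (Finset.univ.erase j).erase r, eta c τ (x j) (x q)) * etad c τ (x j) (x r))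
        - ∑ p ∈ Finset.univ.erase j,
          (∏ q ∈ (Finset.univ.erase p).erase j, eta c τ (x p) (x q)) * etad c τ (x p) (x j) := by
    rw [← Finset.add_sum_erase _ Dp (Finset.mem_univ j)]
    simp only [hDp, reduceIte]
    rw [sub_eq_add_neg]
    congr 1
    rw [← Finset.sum_neg_distrib]
    refine Finset.sum_congr rfl fun p hp => ?_
    rw [if_neg (Finset.mem_erase.1 hp).1]
    ring
  rw [hsplit] at h4
  exact sub_eq_zero.1 h4

lemma sum_erase_swap {M : Type*} [AddCommMonoid M] {m : ℕ} (g : Fin m → Fin m → M) :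
    ∑ p : Fin m, ∑ r ∈ Finset.univ.erase p, g p r
      = ∑ p : Fin m, ∑ r ∈ Finset.univ.erase p, g r p := by
  rw [Finset.sum_comm' (t' := Finset.univ) (s' := fun r => Finset.univ.erase r)]
  intro p r
  simp only [Finset.mem_erase, Finset.mem_univ, and_true, true_and]
  exact ⟨fun h => fun hh => h hh.symm, fun h hh => h hh.symm⟩


lemma core {n : ℕ} {α b c : ℝ} (hα : α ≠ 0) (hb : b ≠ 0)
    (x : Fin (n + 1) → ℝ)
    (hs : ∀ p q : Fin (n + 1), p ≠ q → Real.sin (c * (x p - x q)) ≠ 0) :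
    ∑ p : Fin (n + 1), deriv (fun s : ℝ =>
      ∏ q ∈ Finset.univ.erase p, (α + b / Real.sin (c * (s - x q)) ^ 2)) (x p) = 0 := by
  classical
  -- find the auxiliary root t
  obtain ⟨t, hquad⟩ : ∃ t : ℂ, (α : ℂ) * t ^ 2 + α = (2 * α + 4 * b) * t := by
    have hdeg : (Polynomial.C (α:ℂ) * Polynomial.X ^ 2
        + Polynomial.C (-(2 * α + 4 * b) : ℂ) * Polynomial.X + Polynomial.C (α:ℂ)).degree = 2 :=
      Polynomial.degree_quadratic (Complex.ofReal_ne_zero.2 hα)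
    obtain ⟨t, ht⟩ := Complex.exists_root (by rw [hdeg]; norm_num)
    refine ⟨t, ?_⟩
    have := ht
    simp only [Polynomial.IsRoot, Polynomial.eval_add, Polynomial.eval_mul, Polynomial.eval_pow,
      Polynomial.eval_C, Polynomial.eval_X] at this
    linear_combination this
  have ht0 : t ≠ 0 := by
    rintro rfl
    rw [zero_pow (by norm_num), mul_zero, mul_zero, zero_add] at hquad
    exact (Complex.ofReal_ne_zero.2 hα) hquad
  have ht1 : t ≠ 1 := by
    rintro rfl
    rw [one_pow, mul_one, mul_one] at hquad
    have : (4 * b : ℂ) = 0 := by linear_combination -hquad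
    have : (b : ℂ) = 0 := by linear_combination this / 4
    exact hb (by exact_mod_cast this)
  have ht1' : t⁻¹ ≠ 1 := fun h => ht1 (by rw [← inv_inv t, h, inv_one])
  have hE : ∀ p q : Fin (n + 1), p ≠ q → Efun c (x p) ≠ Efun c (x q) :=
    fun p q h => Efun_ne (hs p q h)
  -- abbreviations
  set A : Fin (n+1) → ℂ := fun p => ∏ q ∈ Finset.univ.erase p, eta c t (x p) (x q) with hA
  set B : Fin (n+1) → ℂ := fun p => ∏ q ∈ Finset.univ.erase p, eta c t⁻¹ (x p) (x q) with hB
  set Ad : Fin (n+1) → ℂ := fun p => ∑ r ∈ Finset.univ.erase p,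
    (∏ q ∈ (Finset.univ.erase p).erase r, eta c t (x p) (x q)) * etad c t (x p) (x r) with hAd
  set Bd : Fin (n+1) → ℂ := fun p => ∑ r ∈ Finset.univ.erase p,
    (∏ q ∈ (Finset.univ.erase p).erase r, eta c t⁻¹ (x p) (x q)) * etad c t⁻¹ (x p) (x r) with hBd
  -- key : coerced derivative formula
  have key : ∀ p : Fin (n+1),
      ((deriv (fun s : ℝ => ∏ q ∈ Finset.univ.erase p,
        (α + b / Real.sin (c * (s - x q)) ^ 2)) (x p) : ℝ) : ℂ)
      = (α : ℂ)^n * (Ad p * B p + A p * Bd p) := by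
    intro p
    have hfac : ∀ q ∈ Finset.univ.erase p, HasDerivAt
        (fun s : ℝ => α + b / Real.sin (c * (s - x q)) ^ 2)
        (-(b * (2 * Real.sin (c * (x p - x q)) * (Real.cos (c * (x p - x q)) * c)))
          / (Real.sin (c * (x p - x q)) ^ 2) ^ 2) (x p) := by
      intro q hq
      have hpq : p ≠ q := fun h => (Finset.mem_erase.1 hq).1 h.symm
      have hsin := hs p q hpq
      have h1 : HasDerivAt (fun s : ℝ => c * (s - x q)) c (x p) := by
        simpa using ((hasDerivAt_id (x p)).sub_const (x q)).const_mul c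
      have h2 : HasDerivAt (fun s : ℝ => Real.sin (c * (s - x q)))
          (Real.cos (c * (x p - x q)) * c) (x p) :=
        (Real.hasDerivAt_sin _).comp _ h1
      have h3 : HasDerivAt (fun s : ℝ => Real.sin (c * (s - x q)) ^ 2)
          (2 * Real.sin (c * (x p - x q)) * (Real.cos (c * (x p - x q)) * c)) (x p) := by
        have := h2.fun_pow 2
        simpa [mul_comm, mul_assoc, mul_left_comm] using this
      have h4 := (hasDerivAt_const (x p) b).fun_div h3 (pow_ne_zero 2 hsin)
      have h5 := h4.const_add α
      refine h5.congr_deriv ?_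
      field_simp
      ring
    have hprod := HasDerivAt.fun_finsetProd hfac
    have hev : (fun s : ℝ => ((∏ q ∈ Finset.univ.erase p,
          (α + b / Real.sin (c * (s - x q)) ^ 2) : ℝ) : ℂ))
        =ᶠ[nhds (x p)] fun s => (α : ℂ)^n *
          ((∏ q ∈ Finset.univ.erase p, eta c t s (x q))
            * ∏ q ∈ Finset.univ.erase p, eta c t⁻¹ s (x q)) := by
      have hallev : ∀ᶠ s in nhds (x p), ∀ q ∈ Finset.univ.erase p,
          Real.sin (c * (s - x q)) ≠ 0 := by
        rw [Filter.eventually_all_finset]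
        intro q hq
        have hpq : p ≠ q := fun h => (Finset.mem_erase.1 hq).1 h.symm
        have hcont : ContinuousAt (fun s : ℝ => Real.sin (c * (s - x q))) (x p) := by
          fun_prop
        exact hcont.eventually_ne (hs p q hpq)
      filter_upwards [hallev] with s hall
      rw [Complex.ofReal_prod]
      have hfq : ∀ q ∈ Finset.univ.erase p,
          ((α + b / Real.sin (c * (s - x q)) ^ 2 : ℝ) : ℂ)
          = (α : ℂ) * (eta c t s (x q) * eta c t⁻¹ s (x q)) := fun q hq => by
        rw [eta_factor c ht0 α b hquad (hall q hq), mul_assoc]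
      rw [Finset.prod_congr rfl hfq, Finset.prod_mul_distrib, Finset.prod_const,
        Finset.card_erase_of_mem (Finset.mem_univ p), Finset.card_univ, Fintype.card_fin,
        Nat.add_sub_cancel, Finset.prod_mul_distrib]
    have hAc : HasDerivAt (fun s : ℝ => ∏ q ∈ Finset.univ.erase p, eta c t s (x q))
        (Ad p) (x p) := by
      have hd := HasDerivAt.fun_finsetProd (u := Finset.univ.erase p)
        (f := fun q s => eta c t s (x q)) (f' := fun q => etad c t (x p) (x q)) (x := x p)
        (fun q hq2 => hasDerivAt_eta_fst c t (hE p q (fun h => (Finset.mem_erase.1 hq2).1 h.symm)))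
      simpa [hAd, smul_eq_mul, mul_comm] using hd
    have hBc : HasDerivAt (fun s : ℝ => ∏ q ∈ Finset.univ.erase p, eta c t⁻¹ s (x q))
        (Bd p) (x p) := by
      have hd := HasDerivAt.fun_finsetProd (u := Finset.univ.erase p)
        (f := fun q s => eta c t⁻¹ s (x q)) (f' := fun q => etad c t⁻¹ (x p) (x q)) (x := x p)
        (fun q hq2 => hasDerivAt_eta_fst c t⁻¹ (hE p q (fun h => (Finset.mem_erase.1 hq2).1 h.symm)))
      simpa [hBd, smul_eq_mul, mul_comm] using hd
    have hABc := (hAc.mul hBc).const_mul ((α : ℂ)^n)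
    have hco2 := hABc.congr_of_eventuallyEq hev
    have hΦ' := hprod.differentiableAt.hasDerivAt
    exact hΦ'.ofReal_comp.unique hco2
  -- now sum up
  have hsum : ((∑ p : Fin (n+1), deriv (fun s : ℝ => ∏ q ∈ Finset.univ.erase p,
      (α + b / Real.sin (c * (s - x q)) ^ 2)) (x p) : ℝ) : ℂ) = 0 := by
    push_cast
    rw [Finset.sum_congr rfl (fun p _ => key p), ← Finset.mul_sum]
    suffices hT : ∑ p : Fin (n+1), (Ad p * B p + A p * Bd p) = 0 by rw [hT, mul_zero]
    have hIA : ∀ p : Fin (n+1), Ad p = ∑ r ∈ Finset.univ.erase p,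
        (∏ q ∈ (Finset.univ.erase r).erase p, eta c t (x r) (x q)) * etad c t (x r) (x p) :=
      fun p => Ilem c ht1 x hE p
    have hIB : ∀ p : Fin (n+1), Bd p = ∑ r ∈ Finset.univ.erase p,
        (∏ q ∈ (Finset.univ.erase r).erase p, eta c t⁻¹ (x r) (x q)) * etad c t⁻¹ (x r) (x p) :=
      fun p => Ilem c ht1' x hE p
    calc ∑ p : Fin (n+1), (Ad p * B p + A p * Bd p)
        = ∑ p : Fin (n+1),
          (∑ r ∈ Finset.univ.erase p,
            ((∏ q ∈ (Finset.univ.erase r).erase p, eta c t (x r) (x q))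
              * etad c t (x r) (x p)) * B p
          + ∑ r ∈ Finset.univ.erase p,
            A p * ((∏ q ∈ (Finset.univ.erase r).erase p, eta c t⁻¹ (x r) (x q))
              * etad c t⁻¹ (x r) (x p))) := by
          refine Finset.sum_congr rfl fun p _ => ?_
          rw [hIA p, hIB p, Finset.sum_mul, Finset.mul_sum]
      _ = ∑ p : Fin (n+1), ∑ r ∈ Finset.univ.erase p,
            ((∏ q ∈ (Finset.univ.erase r).erase p, eta c t (x r) (x q))
              * etad c t (x r) (x p)) * B p
        + ∑ p : Fin (n+1), ∑ r ∈ Finset.univ.erase p,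
            A p * ((∏ q ∈ (Finset.univ.erase r).erase p, eta c t⁻¹ (x r) (x q))
              * etad c t⁻¹ (x r) (x p)) := by
          rw [Finset.sum_add_distrib]
      _ = ∑ p : Fin (n+1), ∑ r ∈ Finset.univ.erase p,
            ((∏ q ∈ (Finset.univ.erase r).erase p, eta c t (x r) (x q))
              * etad c t (x r) (x p)) * B p
        + ∑ p : Fin (n+1), ∑ r ∈ Finset.univ.erase p,
            A r * ((∏ q ∈ (Finset.univ.erase p).erase r, eta c t⁻¹ (x p) (x q))
              * etad c t⁻¹ (x p) (x r)) := by
          rw [sum_erase_swap (g := fun p r =>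
            A p * ((∏ q ∈ (Finset.univ.erase r).erase p, eta c t⁻¹ (x r) (x q))
              * etad c t⁻¹ (x r) (x p)))]
      _ = ∑ p : Fin (n+1), ∑ r ∈ Finset.univ.erase p,
            (((∏ q ∈ (Finset.univ.erase r).erase p, eta c t (x r) (x q))
              * etad c t (x r) (x p)) * B p
            + A r * ((∏ q ∈ (Finset.univ.erase p).erase r, eta c t⁻¹ (x p) (x q))
              * etad c t⁻¹ (x p) (x r))) := by
          rw [← Finset.sum_add_distrib]
          exact Finset.sum_congr rfl fun p _ => (Finset.sum_add_distrib).symm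
      _ = 0 := by
          refine Finset.sum_eq_zero fun p _ => Finset.sum_eq_zero fun r hr => ?_
          have hrp : r ≠ p := (Finset.mem_erase.1 hr).1
          have hBexp : B p = eta c t⁻¹ (x p) (x r)
              * ∏ q ∈ (Finset.univ.erase p).erase r, eta c t⁻¹ (x p) (x q) :=
            (Finset.mul_prod_erase _ _ (Finset.mem_erase.2 ⟨hrp, Finset.mem_univ r⟩)).symm
          have hAexp : A r = eta c t (x r) (x p)
              * ∏ q ∈ (Finset.univ.erase r).erase p, eta c t (x r) (x q) :=
            (Finset.mul_prod_erase _ _ (Finset.mem_erase.2 ⟨hrp.symm, Finset.mem_univ p⟩)).symm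
          rw [hBexp, hAexp]
          linear_combination ((∏ q ∈ (Finset.univ.erase r).erase p, eta c t (x r) (x q))
            * (∏ q ∈ (Finset.univ.erase p).erase r, eta c t⁻¹ (x p) (x q)))
            * eta_cancel c ht0 (hE r p hrp)
  exact_mod_cast hsum

/-- For every integer `n ≥ 2` and `c ≠ 0`, the function
`f(x) = a + b/sin²(cx)` satisfies the Ruijsenaars–Schneider functional
equation at all points `x₁,…,x_{n+1}` such that `c(x_p − x_q)` is never an
integer multiple of `π` for `p ≠ q`. -/
theorem stmt3 (n : ℕ) (hn : 2 ≤ n) (a b c : ℝ) (hc : c ≠ 0)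
    (f : ℝ → ℝ) (hf : ∀ x : ℝ, Real.sin (c * x) ≠ 0 → f x = a + b / (Real.sin (c * x)) ^ 2)
    (x : Fin (n + 1) → ℝ)
    (hx : ∀ p q, p ≠ q → ∀ m : ℤ, c * (x p - x q) ≠ m * Real.pi) :
    ∑ p : Fin (n + 1),
      deriv (fun t : ℝ => ∏ q ∈ Finset.univ.erase p, f (t - x q)) (x p) = 0 := by
  classical
  have hs : ∀ p q : Fin (n + 1), p ≠ q → Real.sin (c * (x p - x q)) ≠ 0 := by
    intro p q hpq h
    obtain ⟨k, hk⟩ := Real.sin_eq_zero_iff.1 h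
    exact hx p q hpq k hk.symm
  have hallev : ∀ p : Fin (n + 1), ∀ᶠ s in nhds (x p), ∀ q ∈ Finset.univ.erase p,
      Real.sin (c * (s - x q)) ≠ 0 := by
    intro p
    rw [Filter.eventually_all_finset]
    intro q hq
    have hpq : p ≠ q := fun h => (Finset.mem_erase.1 hq).1 h.symm
    have hcont : ContinuousAt (fun s : ℝ => Real.sin (c * (s - x q))) (x p) := by fun_prop
    exact hcont.eventually_ne (hs p q hpq)
  have hstep : ∀ p : Fin (n + 1),
      deriv (fun s : ℝ => ∏ q ∈ Finset.univ.erase p, f (s - x q)) (x p)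
      = deriv (fun s : ℝ => ∏ q ∈ Finset.univ.erase p,
          (a + b / Real.sin (c * (s - x q)) ^ 2)) (x p) := by
    intro p
    apply Filter.EventuallyEq.deriv_eq
    filter_upwards [hallev p] with s hall
    exact Finset.prod_congr rfl fun q hq => hf _ (hall q hq)
  rw [Finset.sum_congr rfl fun p _ => hstep p]
  set gd : ℝ → ℝ := fun u =>
    -(b * (2 * Real.sin (c * u) * (Real.cos (c * u) * c))) / ((Real.sin (c * u)) ^ 2) ^ 2
    with hgd
  set SS : ℝ → ℝ := fun α => ∑ p : Fin (n + 1), ∑ r ∈ Finset.univ.erase p,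
    (∏ q ∈ (Finset.univ.erase p).erase r, (α + b / Real.sin (c * (x p - x q)) ^ 2))
      * gd (x p - x r) with hSS
  have hbridge : ∀ α : ℝ, ∑ p : Fin (n + 1), deriv (fun s : ℝ =>
      ∏ q ∈ Finset.univ.erase p, (α + b / Real.sin (c * (s - x q)) ^ 2)) (x p) = SS α := by
    intro α
    refine Finset.sum_congr rfl fun p _ => ?_
    have hfac : ∀ q ∈ Finset.univ.erase p, HasDerivAt
        (fun s : ℝ => α + b / Real.sin (c * (s - x q)) ^ 2) (gd (x p - x q)) (x p) := by
      intro q hq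
      have hpq : p ≠ q := fun h => (Finset.mem_erase.1 hq).1 h.symm
      have hsin := hs p q hpq
      have h1 : HasDerivAt (fun s : ℝ => c * (s - x q)) c (x p) := by
        simpa using ((hasDerivAt_id (x p)).sub_const (x q)).const_mul c
      have h2 : HasDerivAt (fun s : ℝ => Real.sin (c * (s - x q)))
          (Real.cos (c * (x p - x q)) * c) (x p) :=
        (Real.hasDerivAt_sin _).comp _ h1
      have h3 : HasDerivAt (fun s : ℝ => Real.sin (c * (s - x q)) ^ 2)
          (2 * Real.sin (c * (x p - x q)) * (Real.cos (c * (x p - x q)) * c)) (x p) := by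
        have := h2.fun_pow 2
        simpa [mul_comm, mul_assoc, mul_left_comm] using this
      have h4 := (hasDerivAt_const (x p) b).fun_div h3 (pow_ne_zero 2 hsin)
      have h5 := h4.const_add α
      refine h5.congr_deriv ?_
      rw [hgd]
      field_simp
      ring
    have hprod := HasDerivAt.fun_finsetProd hfac
    simpa [smul_eq_mul] using hprod.deriv
  rw [hbridge a]
  by_cases hb : b = 0
  · rw [hSS]
    refine Finset.sum_eq_zero fun p _ => Finset.sum_eq_zero fun r _ => ?_
    rw [hgd]
    simp [hb]
  · have hzero : ∀ α : ℝ, α ≠ 0 → SS α = 0 := fun α hα => by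
      rw [← hbridge α]; exact core hα hb x hs
    by_cases ha : a = 0
    · have hcont : Continuous SS := by
        rw [hSS]
        refine continuous_finset_sum _ fun p _ => continuous_finset_sum _ fun r _ => ?_
        refine Continuous.mul ?_ continuous_const
        exact continuous_finset_prod _ fun q _ => (continuous_id.add continuous_const)
      have heq : SS = fun _ => (0 : ℝ) := by
        refine hcont.ext_on (dense_compl_singleton (0 : ℝ)) continuous_const ?_
        intro α hα
        exact hzero α (Set.mem_compl_singleton_iff.1 hα)
      rw [heq]
    · exact hzero a ha
end

section
/- Let f(x) = cosh(x)/sinh²(x) for x ≠ 0. Then there exist real numbers x₁, x₂, x₃, pairwise distinct, such that ∂/∂x₁[f(x₁−x₂)f(x₁−x₃)] + ∂/∂x₂[f(x₂−x₁)f(x₂−x₃)] + ∂/∂x₃[f(x₃−x₁)f(x₃−x₂)] ≠ 0; that is, f fails to satisfy the three-particle (n = 2) Ruijsenaars–Schneider functional equation. -/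
open Real

noncomputable def RSg (x : ℝ) : ℝ := Real.cosh x / (Real.sinh x) ^ 2

lemma RSg_hasDerivAt {u : ℝ} (hu : u ≠ 0) :
    HasDerivAt RSg
      ((Real.sinh u ^ 2 - 2 * Real.cosh u ^ 2) / Real.sinh u ^ 3) u := by
  have hs : Real.sinh u ≠ 0 := by simpa using hu
  have h := (Real.hasDerivAt_cosh u).div ((Real.hasDerivAt_sinh u).pow 2)
    (pow_ne_zero 2 hs)
  refine h.congr_deriv ?_
  simp only [Pi.pow_apply]
  field_simp
  ring

lemma RSderiv (f : ℝ → ℝ)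
    (hf : ∀ x : ℝ, x ≠ 0 → f x = Real.cosh x / (Real.sinh x) ^ 2)
    (a b c : ℝ) (h1 : a ≠ b) (h2 : a ≠ c) :
    deriv (fun t : ℝ => f (t - b) * f (t - c)) a =
      (Real.sinh (a-b) ^ 2 - 2 * Real.cosh (a-b) ^ 2) / Real.sinh (a-b) ^ 3
        * RSg (a - c)
      + RSg (a - b)
        * ((Real.sinh (a-c) ^ 2 - 2 * Real.cosh (a-c) ^ 2) / Real.sinh (a-c) ^ 3) := by
  have hev : (fun t : ℝ => f (t - b) * f (t - c))
      =ᶠ[nhds a] (fun t : ℝ => RSg (t - b) * RSg (t - c)) := by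
    have hopen : IsOpen {t : ℝ | t ≠ b ∧ t ≠ c} := by
      have : {t : ℝ | t ≠ b ∧ t ≠ c} = {b}ᶜ ∩ {c}ᶜ := by ext t; simp [and_comm]
      rw [this]
      exact (isOpen_compl_singleton).inter isOpen_compl_singleton
    filter_upwards [hopen.mem_nhds ⟨h1, h2⟩] with t ht
    rw [hf _ (sub_ne_zero.mpr ht.1), hf _ (sub_ne_zero.mpr ht.2)]
    rfl
  rw [hev.deriv_eq]
  have hab : a - b ≠ 0 := sub_ne_zero.mpr h1
  have hac : a - c ≠ 0 := sub_ne_zero.mpr h2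
  have d1 : HasDerivAt (fun t : ℝ => RSg (t - b))
      ((Real.sinh (a-b) ^ 2 - 2 * Real.cosh (a-b) ^ 2) / Real.sinh (a-b) ^ 3) a := by
    have := (RSg_hasDerivAt hab).comp a ((hasDerivAt_id a).sub_const b)
    simpa [Function.comp_def] using this
  have d2 : HasDerivAt (fun t : ℝ => RSg (t - c))
      ((Real.sinh (a-c) ^ 2 - 2 * Real.cosh (a-c) ^ 2) / Real.sinh (a-c) ^ 3) a := by
    have := (RSg_hasDerivAt hac).comp a ((hasDerivAt_id a).sub_const c)
    simpa [Function.comp_def] using this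
  exact (d1.mul d2).deriv

/-- The function `f(x) = cosh(x)/sinh²(x)` fails to satisfy the
three-particle (`n = 2`) Ruijsenaars–Schneider functional equation: there are
pairwise distinct real `x₁, x₂, x₃` at which
`∂/∂x₁[f(x₁−x₂)f(x₁−x₃)] + ∂/∂x₂[f(x₂−x₁)f(x₂−x₃)] + ∂/∂x₃[f(x₃−x₁)f(x₃−x₂)] ≠ 0`. -/
theorem stmt4 (f : ℝ → ℝ)
    (hf : ∀ x : ℝ, x ≠ 0 → f x = Real.cosh x / (Real.sinh x) ^ 2) :
    ∃ x₁ x₂ x₃ : ℝ, x₁ ≠ x₂ ∧ x₁ ≠ x₃ ∧ x₂ ≠ x₃ ∧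
      deriv (fun t : ℝ => f (t - x₂) * f (t - x₃)) x₁ +
      deriv (fun t : ℝ => f (t - x₁) * f (t - x₃)) x₂ +
      deriv (fun t : ℝ => f (t - x₁) * f (t - x₂)) x₃ ≠ 0 := by
  refine ⟨Real.log 6, Real.log 3, 0, ?_, ?_, ?_, ?_⟩
  · intro h
    have := Real.log_injOn_pos (by norm_num) (by norm_num) h
    norm_num at this
  · exact (Real.log_pos (by norm_num)).ne'
  · exact (Real.log_pos (by norm_num)).ne'
  · have h12 : Real.log 6 ≠ Real.log 3 := by
      intro h
      have := Real.log_injOn_pos (by norm_num) (by norm_num) h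
      norm_num at this
    have h13 : Real.log 6 ≠ (0:ℝ) := (Real.log_pos (by norm_num)).ne'
    have h23 : Real.log 3 ≠ (0:ℝ) := (Real.log_pos (by norm_num)).ne'
    rw [RSderiv f hf _ _ _ h12 h13,
        RSderiv f hf _ _ _ (Ne.symm h12) h23,
        RSderiv f hf _ _ _ (Ne.symm h13) (Ne.symm h23)]
    have e63 : Real.log 6 - Real.log 3 = Real.log 2 := by
      rw [← Real.log_div (by norm_num) (by norm_num)]; norm_num
    have e36 : Real.log 3 - Real.log 6 = -Real.log 2 := by
      rw [← neg_sub, e63]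
    have s2 : Real.sinh (Real.log 2) = 3/4 := by
      rw [Real.sinh_log (by norm_num)]; norm_num
    have c2 : Real.cosh (Real.log 2) = 5/4 := by
      rw [Real.cosh_log (by norm_num)]; norm_num
    have s3 : Real.sinh (Real.log 3) = 4/3 := by
      rw [Real.sinh_log (by norm_num)]; norm_num
    have c3 : Real.cosh (Real.log 3) = 5/3 := by
      rw [Real.cosh_log (by norm_num)]; norm_num
    have s6 : Real.sinh (Real.log 6) = 35/12 := by
      rw [Real.sinh_log (by norm_num)]; norm_num
    have c6 : Real.cosh (Real.log 6) = 37/12 := by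
      rw [Real.cosh_log (by norm_num)]; norm_num
    simp only [RSg, e63, e36, sub_zero, zero_sub, Real.sinh_neg, Real.cosh_neg,
      s2, c2, s3, c3, s6, c6]
    norm_num
end

section
/- Let a₀ ∈ ℝ, a₀ ≠ 0, and define F : ℝ → ℝ by F(k) = πk·coth(πk/a₀) for k ≠ 0 and F(0) = a₀. Then for all k, l ∈ ℝ: (k·F(l) + l·F(k))·F(k+l) = (k+l)·F(k)·F(l) + π²·k·l·(k+l). -/
open Real

lemma coth_add_key (x y : ℝ) (hx : Real.sinh x ≠ 0) (hy : Real.sinh y ≠ 0)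
    (hxy : Real.sinh (x + y) ≠ 0) :
    (Real.cosh x / Real.sinh x + Real.cosh y / Real.sinh y) *
      (Real.cosh (x + y) / Real.sinh (x + y)) =
    (Real.cosh x / Real.sinh x) * (Real.cosh y / Real.sinh y) + 1 := by
  field_simp
  rw [Real.sinh_add, Real.cosh_add]
  ring

/-- With `F(k) = πk coth(πk/a₀)` for `k ≠ 0` extended by
`F(0) = a₀`, one has
`(k F(l) + l F(k)) F(k+l) = (k+l) F(k) F(l) + π² k l (k+l)` for all `k, l`. -/
theorem stmt8 (a₀ : ℝ) (ha₀ : a₀ ≠ 0) (F : ℝ → ℝ)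
    (hF0 : F 0 = a₀)
    (hF : ∀ k : ℝ, k ≠ 0 →
      F k = Real.pi * k * (Real.cosh (Real.pi * k / a₀) / Real.sinh (Real.pi * k / a₀)))
    (k l : ℝ) :
    (k * F l + l * F k) * F (k + l) =
      (k + l) * F k * F l + Real.pi ^ 2 * k * l * (k + l) := by
  rcases eq_or_ne k 0 with hk | hk
  · subst hk; simp [hF0]; try ring
  rcases eq_or_ne l 0 with hl | hl
  · subst hl; simp [hF0]; try ring
  rcases eq_or_ne (k + l) 0 with hkl | hkl
  · have hlk : l = -k := by linarith
    subst hlk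
    have h1 := hF k hk
    have h2 := hF (-k) (by simpa using hk)
    rw [hkl, hF0, h1, h2]
    have : Real.pi * -k / a₀ = -(Real.pi * k / a₀) := by ring
    rw [this, Real.cosh_neg, Real.sinh_neg]
    field_simp
    ring
  · have h1 := hF k hk
    have h2 := hF l hl
    have h3 := hF (k + l) hkl
    set x := Real.pi * k / a₀ with hx
    set y := Real.pi * l / a₀ with hy
    have hxy : Real.pi * (k + l) / a₀ = x + y := by rw [hx, hy]; ring
    have hxne : x ≠ 0 := by
      simp [hx, div_eq_zero_iff, mul_eq_zero, Real.pi_ne_zero, hk, ha₀]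
    have hyne : y ≠ 0 := by
      simp [hy, div_eq_zero_iff, mul_eq_zero, Real.pi_ne_zero, hl, ha₀]
    have hxyne : x + y ≠ 0 := by
      rw [← hxy]
      simp [div_eq_zero_iff, mul_eq_zero, Real.pi_ne_zero, hkl, ha₀]
    have hsx : Real.sinh x ≠ 0 := by rwa [ne_eq, Real.sinh_eq_zero]
    have hsy : Real.sinh y ≠ 0 := by rwa [ne_eq, Real.sinh_eq_zero]
    have hsxy : Real.sinh (x + y) ≠ 0 := by rwa [ne_eq, Real.sinh_eq_zero]
    rw [h1, h2, h3, hxy]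
    have key := coth_add_key x y hsx hsy hsxy
    linear_combination (Real.pi ^ 2 * k * l * (k + l)) * key
end

section
/- Let a₀ ∈ ℝ, a₀ ≠ 0. Suppose F : ℝ → ℝ is continuous, differentiable on ℝ∖{0}, satisfies F(0) = a₀, and satisfies the differential equation a₀·k·F′(k) − a₀·F(k) + F(k)² = π²·k² for all k ≠ 0. Then F(k) = πk·coth(πk/a₀) for all k ≠ 0. -/
open Real Set Filter MeasureTheory intervalIntegral Topology

set_option maxHeartbeats 1000000 in
lemma aux9 (a₀ : ℝ) (ha₀ : a₀ ≠ 0) (F : ℝ → ℝ)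
    (hcont : Continuous F)
    (hdiff : ∀ k : ℝ, k ≠ 0 → DifferentiableAt ℝ F k)
    (hF0 : F 0 = a₀)
    (hode : ∀ k : ℝ, k ≠ 0 →
      a₀ * k * deriv F k - a₀ * F k + (F k) ^ 2 = Real.pi ^ 2 * k ^ 2) :
    ∀ k : ℝ, 0 < k →
      F k = Real.pi * k * (Real.cosh (Real.pi * k / a₀) / Real.sinh (Real.pi * k / a₀)) := by
  set c : ℝ := π / a₀ with hc
  have hcne : c ≠ 0 := div_ne_zero Real.pi_ne_zero ha₀
  set g : ℝ → ℝ := fun t => F t / (a₀ * t) with hgdef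
  have hgc : ∀ t : ℝ, t ≠ 0 → ContinuousAt g t := by
    intro t ht
    exact (hcont.continuousAt).div (continuousAt_const.mul continuousAt_id)
      (mul_ne_zero ha₀ ht)
  have hgcon : ContinuousOn g (Ioi (0:ℝ)) := by
    intro t ht; exact (hgc t (ne_of_gt ht)).continuousWithinAt
  -- integrability on intervals inside (0,∞)
  have hgint : ∀ x y : ℝ, 0 < x → 0 < y → IntervalIntegrable g volume x y := by
    intro x y hx hy
    apply ContinuousOn.intervalIntegrable
    apply hgcon.mono
    intro t ht
    rcases ht with ⟨h1, _⟩
    exact lt_of_lt_of_le (lt_min hx hy) (by simpa [uIcc] using h1)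
  set I : ℝ → ℝ := fun k => ∫ t in (1:ℝ)..k, g t with hIdef
  have hI : ∀ k : ℝ, 0 < k → HasDerivAt I (g k) k := by
    intro k hk
    exact intervalIntegral.integral_hasDerivAt_right (hgint 1 k one_pos hk)
      (hgcon.stronglyMeasurableAtFilter isOpen_Ioi k hk) (hgc k hk.ne')
  set w : ℝ → ℝ := fun k => Real.exp (I k) with hwdef
  have hw : ∀ k : ℝ, 0 < k → HasDerivAt w (w k * g k) k := by
    intro k hk
    simpa [hwdef, mul_comm] using (hI k hk).exp
  have hwpos : ∀ k : ℝ, 0 < w k := fun k => Real.exp_pos _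
  -- derivative of g
  have hg' : ∀ k : ℝ, 0 < k →
      HasDerivAt g ((deriv F k * (a₀ * k) - F k * a₀) / (a₀ * k) ^ 2) k := by
    intro k hk
    exact ((hdiff k hk.ne').hasDerivAt).div
      ((hasDerivAt_id k).const_mul a₀ |>.congr_deriv (by ring))
      (mul_ne_zero ha₀ hk.ne')
  set W : ℝ → ℝ := fun k => w k * (c * Real.cosh (c * k)) - w k * g k * Real.sinh (c * k)
    with hWdef
  have hW0 : ∀ k : ℝ, 0 < k → HasDerivAt W 0 k := by
    intro k hk
    have hlin : HasDerivAt (fun x : ℝ => c * x) c k := by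
      simpa using (hasDerivAt_id k).const_mul c
    have hch : HasDerivAt (fun x : ℝ => c * Real.cosh (c * x)) (c * (c * Real.sinh (c * k))) k := by
      have := ((Real.hasDerivAt_cosh (c * k)).comp k hlin).const_mul c
      simpa [mul_comm, mul_left_comm, mul_assoc] using this
    have hsh : HasDerivAt (fun x : ℝ => Real.sinh (c * x)) (c * Real.cosh (c * k)) k := by
      have := (Real.hasDerivAt_sinh (c * k)).comp k hlin
      simpa only [Function.comp_def, mul_comm (Real.cosh (c * k)) c] using this
    have h1 : HasDerivAt (fun x => w x * (c * Real.cosh (c * x)))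
        (w k * g k * (c * Real.cosh (c * k)) + w k * (c * (c * Real.sinh (c * k)))) k :=
      (hw k hk).mul hch
    have h2 : HasDerivAt (fun x => w x * g x * Real.sinh (c * x))
        ((w k * g k * g k + w k * ((deriv F k * (a₀ * k) - F k * a₀) / (a₀ * k) ^ 2))
          * Real.sinh (c * k) + w k * g k * (c * Real.cosh (c * k))) k :=
      ((hw k hk).mul (hg' k hk)).mul hsh
    have key : a₀ * k * deriv F k - a₀ * F k + (F k) ^ 2 = π ^ 2 * k ^ 2 := hode k hk.ne'
    have hane : (a₀ : ℝ) * k ≠ 0 := mul_ne_zero ha₀ hk.ne'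
    have hzero : c ^ 2 - g k ^ 2 - (deriv F k * (a₀ * k) - F k * a₀) / (a₀ * k) ^ 2 = 0 := by
      have hgk : g k = F k / (a₀ * k) := rfl
      rw [hgk, hc]
      field_simp
      linear_combination (-1 : ℝ) * key
    have heq : (w k * g k * (c * Real.cosh (c * k)) + w k * (c * (c * Real.sinh (c * k)))) -
        ((w k * g k * g k + w k * ((deriv F k * (a₀ * k) - F k * a₀) / (a₀ * k) ^ 2))
          * Real.sinh (c * k) + w k * g k * (c * Real.cosh (c * k))) = 0 := by
      linear_combination (w k * Real.sinh (c * k)) * hzero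
    have := h1.sub h2
    rwa [heq] at this
  -- W is constant on (0, ∞)
  have hWc : ∀ a b : ℝ, 0 < a → ∀ x ∈ Icc a b, W x = W a := by
    intro a b ha
    apply constant_of_has_deriv_right_zero
    · intro t ht
      exact ((hW0 t (lt_of_lt_of_le ha ht.1)).continuousAt).continuousWithinAt
    · intro t ht
      exact (hW0 t (lt_of_lt_of_le ha ht.1)).hasDerivWithinAt
  have hWconst : ∀ x : ℝ, 0 < x → W x = W 1 := by
    intro x hx
    rcases le_total x 1 with h | h
    · exact (hWc x 1 hx 1 ⟨h, le_refl 1⟩).symm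
    · exact hWc 1 x one_pos x ⟨h, le_refl x⟩
  -- slope limit: sinh (c k) / k → c
  have hslope : Tendsto (fun k => Real.sinh (c * k) / k) (𝓝[>] (0:ℝ)) (𝓝 c) := by
    have hlin0 : HasDerivAt (fun x : ℝ => c * x) c 0 := by
      simpa using (hasDerivAt_id (0:ℝ)).const_mul c
    have hd : HasDerivAt (fun x : ℝ => Real.sinh (c * x)) c 0 := by
      have := (Real.hasDerivAt_sinh (c * 0)).comp 0 hlin0
      simpa [Function.comp_def] using this
    have h := hasDerivAt_iff_tendsto_slope.mp hd
    have h2 := h.mono_left (nhdsWithin_mono 0 (fun x hx => ne_of_gt hx))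
    apply h2.congr
    intro y
    simp [slope, div_eq_inv_mul]
  -- limit of the bracket
  have hφ : Tendsto (fun k => c * Real.cosh (c * k) - g k * Real.sinh (c * k))
      (𝓝[>] (0:ℝ)) (𝓝 0) := by
    have h1 : Tendsto (fun k : ℝ => c * Real.cosh (c * k)) (𝓝[>] (0:ℝ)) (𝓝 c) := by
      have hcont2 : Continuous fun k : ℝ => c * Real.cosh (c * k) := continuous_const.mul (Real.continuous_cosh.comp (continuous_const.mul continuous_id))
      have := (hcont2.tendsto 0).mono_left (nhdsWithin_le_nhds (s := Ioi (0:ℝ)))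
      simpa using this
    have hF1 : Tendsto (fun k : ℝ => F k / a₀) (𝓝[>] (0:ℝ)) (𝓝 1) := by
      have := ((hcont.tendsto 0).mono_left
        (nhdsWithin_le_nhds (s := Ioi (0:ℝ)))).div_const a₀
      simpa [hF0, div_self ha₀] using this
    have h2 : Tendsto (fun k => g k * Real.sinh (c * k)) (𝓝[>] (0:ℝ)) (𝓝 c) := by
      have hmul := hF1.mul hslope
      rw [one_mul] at hmul
      apply hmul.congr'
      filter_upwards [self_mem_nhdsWithin] with k hk
      have hk0 : (k:ℝ) ≠ 0 := ne_of_gt hk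
      show F k / a₀ * (Real.sinh (c * k) / k) = g k * Real.sinh (c * k)
      have : g k = F k / (a₀ * k) := rfl
      rw [this]
      field_simp
    have := h1.sub h2
    simpa using this
  -- bound for w near 0
  have hev : ∀ᶠ t in 𝓝 (0:ℝ), 0 < F t / a₀ := by
    have ht : Tendsto (fun t : ℝ => F t / a₀) (𝓝 0) (𝓝 1) := by
      have := (hcont.tendsto 0).div_const a₀
      simpa [hF0, div_self ha₀] using this
    exact ht.eventually (eventually_gt_nhds zero_lt_one)
  obtain ⟨δ, hδpos, hδ⟩ := Metric.eventually_nhds_iff.mp hev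
  set δ' : ℝ := min (δ / 2) 1 with hδ'def
  have hδ'pos : 0 < δ' := lt_min (by linarith) one_pos
  have hδ'lt : δ' < δ := lt_of_le_of_lt (min_le_left _ _) (by linarith)
  have hgpos : ∀ t : ℝ, 0 < t → t ≤ δ' → 0 ≤ g t := by
    intro t ht htδ
    have hdist : dist t (0:ℝ) < δ := by
      rw [Real.dist_eq, sub_zero, abs_of_pos ht]
      exact lt_of_le_of_lt htδ hδ'lt
    have hFt := hδ hdist
    have : g t = (F t / a₀) / t := by
      show F t / (a₀ * t) = F t / a₀ / t
      rw [div_div]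
    rw [this]
    positivity
  have hwle : ∀ k : ℝ, 0 < k → k ≤ δ' → w k ≤ w δ' := by
    intro k hk hkδ
    have hint1 : IntervalIntegrable g volume 1 δ' := hgint 1 δ' one_pos hδ'pos
    have hint2 : IntervalIntegrable g volume δ' k := hgint δ' k hδ'pos hk
    have hsplit : I δ' + ∫ t in δ'..k, g t = I k :=
      intervalIntegral.integral_add_adjacent_intervals hint1 hint2
    have hnn : 0 ≤ ∫ t in k..δ', g t := by
      apply intervalIntegral.integral_nonneg hkδ
      intro u hu
      exact hgpos u (lt_of_lt_of_le hk hu.1) hu.2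
    have hneg : (∫ t in δ'..k, g t) ≤ 0 := by
      rw [intervalIntegral.integral_symm]
      linarith
    have : I k ≤ I δ' := by rw [← hsplit]; linarith
    exact Real.exp_le_exp.mpr this
  -- limit of W at 0+
  have hWlim : Tendsto W (𝓝[>] (0:ℝ)) (𝓝 0) := by
    rw [tendsto_zero_iff_abs_tendsto_zero]
    apply squeeze_zero'
    · filter_upwards with k using abs_nonneg _
    · filter_upwards [Ioo_mem_nhdsGT_of_mem (Set.mem_Ico.mpr ⟨le_refl (0:ℝ), hδ'pos⟩)]
        with k hk
      have hk0 : 0 < k := hk.1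
      have hWk : W k = w k * (c * Real.cosh (c * k) - g k * Real.sinh (c * k)) := by
        show w k * (c * Real.cosh (c * k)) - w k * g k * Real.sinh (c * k) = _
        ring
      show |W k| ≤ w δ' * |c * Real.cosh (c * k) - g k * Real.sinh (c * k)|
      rw [hWk, abs_mul, abs_of_pos (hwpos k)]
      exact mul_le_mul_of_nonneg_right (hwle k hk0 hk.2.le) (abs_nonneg _)
    · have := (hφ.abs).const_mul (w δ')
      simpa using this
  -- W 1 = 0
  have hW1 : W 1 = 0 := by
    have hconst : Tendsto W (𝓝[>] (0:ℝ)) (𝓝 (W 1)) := by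
      apply Tendsto.congr' _ tendsto_const_nhds
      filter_upwards [self_mem_nhdsWithin] with k hk
      exact (hWconst k hk).symm
    exact tendsto_nhds_unique hconst hWlim
  -- conclude
  intro k hk
  have hWk : W k = 0 := (hWconst k hk).trans hW1
  have hsne : Real.sinh (c * k) ≠ 0 := Real.sinh_ne_zero.mpr (mul_ne_zero hcne hk.ne')
  have h3 : c * Real.cosh (c * k) = g k * Real.sinh (c * k) := by
    have hwne := (hwpos k).ne'
    have h4 : w k * (c * Real.cosh (c * k) - g k * Real.sinh (c * k)) = 0 := by
      have : W k = w k * (c * Real.cosh (c * k)) - w k * g k * Real.sinh (c * k) := rfl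
      nlinarith [hWk, this]
    have h5 := (mul_eq_zero.mp h4).resolve_left hwne
    linarith [sub_eq_zero.mp h5]
  have hFk : F k = g k * (a₀ * k) := by
    show F k = F k / (a₀ * k) * (a₀ * k)
    field_simp
  have hgk2 : g k = c * Real.cosh (c * k) / Real.sinh (c * k) := by
    rw [eq_div_iff hsne]
    linarith [h3]
  have hck : π * k / a₀ = c * k := by rw [hc]; ring
  rw [hFk, hgk2, hck, hc]
  field_simp

/-- If `F : ℝ → ℝ` is continuous, differentiable away from `0`,
satisfies `F(0) = a₀ ≠ 0` and the ODE
`a₀ k F′(k) − a₀ F(k) + F(k)² = π² k²` for all `k ≠ 0`, then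
`F(k) = πk coth(πk/a₀)` for all `k ≠ 0`. -/
theorem stmt9 (a₀ : ℝ) (ha₀ : a₀ ≠ 0) (F : ℝ → ℝ)
    (hcont : Continuous F)
    (hdiff : ∀ k : ℝ, k ≠ 0 → DifferentiableAt ℝ F k)
    (hF0 : F 0 = a₀)
    (hode : ∀ k : ℝ, k ≠ 0 →
      a₀ * k * deriv F k - a₀ * F k + (F k) ^ 2 = Real.pi ^ 2 * k ^ 2) :
    ∀ k : ℝ, k ≠ 0 →
      F k = Real.pi * k * (Real.cosh (Real.pi * k / a₀) / Real.sinh (Real.pi * k / a₀)) := by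
  intro k hk
  rcases lt_or_gt_of_ne hk with hneg | hpos
  · -- apply aux9 to G = F ∘ neg
    set G : ℝ → ℝ := fun x => F (-x) with hGdef
    have hGcont : Continuous G := hcont.comp continuous_neg
    have hGdiff : ∀ x : ℝ, x ≠ 0 → DifferentiableAt ℝ G x := by
      intro x hx
      exact (hdiff (-x) (neg_ne_zero.mpr hx)).comp x (differentiable_neg x)
    have hGderiv : ∀ x : ℝ, deriv G x = -deriv F (-x) := by
      intro x
      exact deriv_comp_neg F x
    have hGode : ∀ x : ℝ, x ≠ 0 →
        a₀ * x * deriv G x - a₀ * G x + (G x) ^ 2 = Real.pi ^ 2 * x ^ 2 := by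
      intro x hx
      have := hode (-x) (neg_ne_zero.mpr hx)
      rw [hGderiv x]
      show a₀ * x * -deriv F (-x) - a₀ * F (-x) + F (-x) ^ 2 = π ^ 2 * x ^ 2
      nlinarith [this]
    have hG0 : G 0 = a₀ := by
      show F (-0) = a₀
      rw [neg_zero, hF0]
    have := aux9 a₀ ha₀ G hGcont hGdiff hG0 hGode (-k) (by linarith)
    have hFk : F k = G (-k) := by simp [hGdef]
    rw [hFk, this, show π * -k / a₀ = -(π * k / a₀) by ring,
      Real.cosh_neg, Real.sinh_neg]
    ring
  · exact aux9 a₀ ha₀ F hcont hdiff hF0 hode k hpos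
end

section
/- Let F : ℝ → ℝ be continuous with F(k) ≠ 0 for every k ∈ ℝ, and suppose that for all k, l ∈ ℝ: (k·F(l) + l·F(k))·F(k+l) = (k+l)·F(k)·F(l). Then F is constant. -/
/-- If `F : ℝ → ℝ` is continuous, nowhere vanishing, and
satisfies `(k F(l) + l F(k)) F(k+l) = (k+l) F(k) F(l)` for all `k, l`, then
`F` is constant. -/
theorem stmt10 (F : ℝ → ℝ) (hcont : Continuous F) (hne : ∀ k : ℝ, F k ≠ 0)
    (heq : ∀ k l : ℝ, (k * F l + l * F k) * F (k + l) = (k + l) * F k * F l) :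
    ∃ c : ℝ, ∀ k : ℝ, F k = c := by
  have hadd : ∀ k l : ℝ, (k + l) / F (k + l) = k / F k + l / F l := by
    intro k l
    have hk := hne k
    have hl := hne l
    have hkl := hne (k + l)
    field_simp
    linarith [heq k l]
  set g : ℝ →+ ℝ :=
    { toFun := fun k => k / F k
      map_zero' := by simp
      map_add' := hadd }
  have hgc : Continuous g := by
    exact continuous_id.div hcont hne
  have hlin := AddMonoidHom.coe_toRealLinearMap g hgc
  have hsm : ∀ k : ℝ, g k = k * g 1 := by
    intro k
    have := (g.toRealLinearMap hgc).map_smul k (1 : ℝ)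
    simpa [hlin, smul_eq_mul] using this
  have hg1 : g 1 ≠ 0 := by
    simp only [g, AddMonoidHom.coe_mk, ZeroHom.coe_mk]
    simp [hne 1]
  have hF : ∀ k : ℝ, k ≠ 0 → F k = F 1 := by
    intro k hk
    have h1 : g 1 = 1 / F 1 := by simp [g]
    have h2 : g k = k / F k := rfl
    have := hsm k
    rw [h1, h2] at this
    have hFk := hne k
    have hF1 := hne 1
    field_simp at this
    exact this.symm
  refine ⟨F 1, fun k => ?_⟩
  rcases eq_or_ne k 0 with rfl | hk
  · have h1 : Filter.Tendsto F (nhdsWithin 0 {(0:ℝ)}ᶜ) (nhds (F 0)) :=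
      (hcont.tendsto 0).mono_left nhdsWithin_le_nhds
    have h2 : Filter.Tendsto F (nhdsWithin 0 {(0:ℝ)}ᶜ) (nhds (F 1)) := by
      apply Filter.Tendsto.congr' _ tendsto_const_nhds
      filter_upwards [self_mem_nhdsWithin] with x hx
      exact (hF x hx).symm
    exact tendsto_nhds_unique h1 h2
  · exact hF k hk
end

section
/- Let F : ℝ → ℝ be an even function and n ≥ 1 an integer. Then for all k₁,…,kₙ, k ∈ ℝ: S_{n+2}(F; k₁,…,kₙ, k, −k) = (F(k)² − π²k²)·S_n(F; k₁,…,kₙ). -/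
open Real Finset
open Real Finset

/-- `S n F k` is the quantity `S_n(F; k₁,…,kₙ)` of equation (6.14):
`[ Σ_{j=1}^{n} k_j Π_{q<j}(F(k_q)+πk_q) Π_{q>j}(F(k_q)−πk_q) ] · (F(Σk)+πΣk)
  − (Σk) · Π_{q=1}^{n}(F(k_q)+πk_q)`. -/
noncomputable def S (n : ℕ) (F : ℝ → ℝ) (k : Fin n → ℝ) : ℝ :=
  (∑ j : Fin n, k j
      * (∏ q ∈ Finset.univ.filter (fun q => q < j), (F (k q) + Real.pi * k q))
      * (∏ q ∈ Finset.univ.filter (fun q => j < q), (F (k q) - Real.pi * k q)))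
    * (F (∑ q, k q) + Real.pi * ∑ q, k q)
  - (∑ q, k q) * ∏ q, (F (k q) + Real.pi * k q)

lemma prod_filter_lt_castSucc {m : ℕ} (g : Fin (m+1) → ℝ) (j : Fin m) :
    ∏ q ∈ Finset.univ.filter (fun q => q < j.castSucc), g q
      = ∏ q ∈ Finset.univ.filter (fun q => q < j), g q.castSucc := by
  rw [Finset.prod_filter, Finset.prod_filter, Fin.prod_univ_castSucc]
  simp [Fin.castSucc_lt_castSucc_iff, (Fin.castSucc_lt_last j).not_gt]

lemma prod_filter_lt_last {m : ℕ} (g : Fin (m+1) → ℝ) :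
    ∏ q ∈ Finset.univ.filter (fun q => q < Fin.last m), g q
      = ∏ q : Fin m, g q.castSucc := by
  rw [Finset.prod_filter, Fin.prod_univ_castSucc]
  simp [Fin.castSucc_lt_last]

lemma prod_filter_gt_castSucc {m : ℕ} (g : Fin (m+1) → ℝ) (j : Fin m) :
    ∏ q ∈ Finset.univ.filter (fun q => j.castSucc < q), g q
      = (∏ q ∈ Finset.univ.filter (fun q => j < q), g q.castSucc) * g (Fin.last m) := by
  rw [Finset.prod_filter, Finset.prod_filter, Fin.prod_univ_castSucc]
  simp [Fin.castSucc_lt_castSucc_iff, Fin.castSucc_lt_last]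

lemma prod_filter_gt_last {m : ℕ} (g : Fin (m+1) → ℝ) :
    ∏ q ∈ Finset.univ.filter (fun q => Fin.last m < q), g q = 1 := by
  rw [Finset.prod_filter, Fin.prod_univ_castSucc]
  simp only [lt_irrefl, if_false, mul_one]
  exact Finset.prod_eq_one fun i _ => if_neg (Fin.castSucc_lt_last i).not_gt

set_option linter.unusedVariables false in
/-- for an even function `F` and any `n ≥ 1`,
`S_{n+2}(F; k₁,…,kₙ, k, −k) = (F(k)² − π²k²) · S_n(F; k₁,…,kₙ)`
(the factorization identity (6.15)). -/
theorem stmt11 (F : ℝ → ℝ) (heven : ∀ x : ℝ, F (-x) = F x)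
    (n : ℕ) (hn : 1 ≤ n) (ks : Fin n → ℝ) (k : ℝ) :
    S (n + 2) F (Fin.snoc (Fin.snoc ks k) (-k)) =
      ((F k) ^ 2 - Real.pi ^ 2 * k ^ 2) * S n F ks := by
  simp only [S, Fin.sum_univ_castSucc]
  simp only [prod_filter_lt_castSucc, prod_filter_lt_last, prod_filter_gt_castSucc,
    prod_filter_gt_last, Fin.prod_univ_castSucc, Fin.snoc_castSucc, Fin.snoc_last, heven, mul_one]
  simp only [mul_neg, sub_neg_eq_add, add_neg_cancel_right]
  have key : (∑ x : Fin n,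
        (ks x * ∏ q ∈ Finset.filter (fun q => q < x) Finset.univ, (F (ks q) + π * ks q)) *
          ((∏ q ∈ Finset.filter (fun q => x < q) Finset.univ, (F (ks q) - π * ks q)) *
            (F k - π * k) * (F k + π * k)))
      = (∑ x : Fin n,
        (ks x * ∏ q ∈ Finset.filter (fun q => q < x) Finset.univ, (F (ks q) + π * ks q)) *
          (∏ q ∈ Finset.filter (fun q => x < q) Finset.univ, (F (ks q) - π * ks q)))
        * ((F k - π * k) * (F k + π * k)) := by
    rw [Finset.sum_mul]; exact Finset.sum_congr rfl fun x _ => by ring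
  rw [key]
  ring
end

section
/- Let n ≥ 3 be an integer and F : ℝ → ℝ a function with F(0) ≠ 0. If S_n(F; k₁,…,kₙ) = 0 for all k₁,…,kₙ ∈ ℝ, then S₂(F; k, l) = 0 for all k, l ∈ ℝ. -/
open Real Finset
open Real Finset

lemma S_snoc (n : ℕ) (F : ℝ → ℝ) (ks : Fin n → ℝ) (k' : Fin (n+1) → ℝ)
    (hk : ∀ q : Fin n, k' q.castSucc = ks q) (hlast : k' (Fin.last n) = 0) :
    S (n+1) F k' = F 0 * S n F ks := by
  have hsum : ∑ q : Fin (n+1), k' q = ∑ q : Fin n, ks q := by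
    rw [Fin.sum_univ_castSucc]; simp [hk, hlast]
  have hprodall : ∏ q : Fin (n+1), (F (k' q) + Real.pi * k' q)
      = (∏ q : Fin n, (F (ks q) + Real.pi * ks q)) * F 0 := by
    rw [Fin.prod_univ_castSucc]; simp [hk, hlast]
  have hsum2 : (∑ j : Fin (n+1), k' j
      * (∏ q ∈ Finset.univ.filter (fun q => q < j), (F (k' q) + Real.pi * k' q))
      * (∏ q ∈ Finset.univ.filter (fun q => j < q), (F (k' q) - Real.pi * k' q)))
      = (∑ j : Fin n, ks j
      * (∏ q ∈ Finset.univ.filter (fun q => q < j), (F (ks q) + Real.pi * ks q))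
      * (∏ q ∈ Finset.univ.filter (fun q => j < q), (F (ks q) - Real.pi * ks q))) * F 0 := by
    rw [Fin.sum_univ_castSucc, hlast]
    simp only [zero_mul, add_zero, Finset.sum_mul]
    apply Finset.sum_congr rfl
    intro j _
    have h1 : (∏ q ∈ Finset.univ.filter (fun q => q < Fin.castSucc j),
        (F (k' q) + Real.pi * k' q))
        = ∏ q ∈ Finset.univ.filter (fun q => q < j), (F (ks q) + Real.pi * ks q) := by
      rw [Finset.prod_filter, Finset.prod_filter, Fin.prod_univ_castSucc]
      simp [Fin.castSucc_lt_castSucc_iff, hk, (Fin.castSucc_lt_last j).asymm]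
    have h2 : (∏ q ∈ Finset.univ.filter (fun q => Fin.castSucc j < q),
        (F (k' q) - Real.pi * k' q))
        = (∏ q ∈ Finset.univ.filter (fun q => j < q), (F (ks q) - Real.pi * ks q)) * F 0 := by
      rw [Finset.prod_filter, Finset.prod_filter, Fin.prod_univ_castSucc]
      simp [Fin.castSucc_lt_castSucc_iff, hk, hlast, Fin.castSucc_lt_last]
    rw [h1, h2, hk]
    ring
  simp only [S, hsum, hsum2, hprodall]
  ring

lemma descend (F : ℝ → ℝ) (hF0 : F 0 ≠ 0) :
    ∀ j : ℕ, (∀ ks : Fin (2+j) → ℝ, S (2+j) F ks = 0) → ∀ ks : Fin 2 → ℝ, S 2 F ks = 0 := by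
  intro j
  induction j with
  | zero => intro h ks; exact h ks
  | succ m ih =>
    intro h ks
    apply ih
    intro ks'
    have h0 : S (2+m+1) F (Fin.snoc ks' 0) = 0 := h (Fin.snoc ks' 0)
    rw [S_snoc (2+m) F ks' (Fin.snoc ks' 0) (fun q => Fin.snoc_castSucc _ _ _) (Fin.snoc_last _ _)] at h0
    exact (mul_eq_zero.mp h0).resolve_left hF0

/-- Lemma 2, 𝒢ₙ ⊆ 𝒢₂: if `n ≥ 3`, `F(0) ≠ 0` and
`S_n(F; ·) ≡ 0`, then `S₂(F; ·) ≡ 0`. -/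
theorem stmt13 (n : ℕ) (hn : 3 ≤ n) (F : ℝ → ℝ) (hF0 : F 0 ≠ 0)
    (hS : ∀ ks : Fin n → ℝ, S n F ks = 0) :
    ∀ k l : ℝ, S 2 F ![k, l] = 0 := by
  obtain ⟨j, rfl⟩ : ∃ j, n = 2 + j := ⟨n - 2, by omega⟩
  intro k l
  exact descend F hF0 j hS ![k, l]
end

section
/- Let n ≥ 4 be an even integer and F : ℝ → ℝ an even function such that there exists k₀ ∈ ℝ with F(k₀)² ≠ π²k₀². If S_n(F; k₁,…,kₙ) = 0 for all k₁,…,kₙ ∈ ℝ, then S₂(F; k, l) = 0 for all k, l ∈ ℝ. -/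
open Real Finset
open Real Finset

/-- Telescoping identity:
`Σ_j (f j − g j) · Π_{q<j} f q · Π_{q>j} g q = Π f − Π g`. -/
lemma stmt14_key (n : ℕ) (f g : Fin n → ℝ) :
    ∑ j, (f j - g j) * (∏ q, if q < j then f q else 1) * (∏ q, if j < q then g q else 1)
      = ∏ q, f q - ∏ q, g q := by
  induction n with
  | zero => simp
  | succ n ih =>
    simp only [Fin.sum_univ_succ, Fin.prod_univ_succ, Fin.not_lt_zero, if_false,
      Fin.succ_pos, if_true, Fin.succ_lt_succ_iff, mul_one, one_mul, lt_irrefl]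
    have h1 : (∑ x : Fin n,
        (f x.succ - g x.succ) * (f 0 * ∏ x_1 : Fin n, if x_1 < x then f x_1.succ else 1) *
          (∏ x_1 : Fin n, if x < x_1 then g x_1.succ else 1))
        = f 0 * ((∏ q : Fin n, f q.succ) - ∏ q : Fin n, g q.succ) := by
      rw [← ih (fun q => f q.succ) (fun q => g q.succ), Finset.mul_sum]
      exact Finset.sum_congr rfl fun j _ => by ring
    rw [h1]
    simp only [Finset.prod_const_one]
    ring

lemma stmt14_altsum (t : ℝ) (p : ℕ) :
    ∑ j ∈ Finset.range (2*p), (if Even j then t else -t) = 0 := by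
  induction p with
  | zero => simp
  | succ p ih =>
    rw [show 2*(p+1) = 2*p+1+1 by ring, Finset.sum_range_succ, Finset.sum_range_succ, ih]
    simp [Nat.even_add_one, parity_simps]

lemma stmt14_altprod (A B : ℝ) (p : ℕ) :
    ∏ j ∈ Finset.range (2*p), (if Even j then A else B) = (A*B)^p := by
  induction p with
  | zero => simp
  | succ p ih =>
    rw [show 2*(p+1) = 2*p+1+1 by ring, Finset.prod_range_succ, Finset.prod_range_succ, ih]
    simp [Nat.even_add_one, parity_simps]
    ring

/-- core of Lemma 1, ℱₙ ⊆ ℱ₂: if `n ≥ 4` is even, `F` is even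
with `F(k₀)² ≠ π²k₀²` for some `k₀`, and `S_n(F; ·) ≡ 0`, then
`S₂(F; ·) ≡ 0`. -/
theorem stmt14 (n : ℕ) (hn : 4 ≤ n) (hne : Even n) (F : ℝ → ℝ)
    (heven : ∀ x : ℝ, F (-x) = F x)
    (hk₀ : ∃ k₀ : ℝ, (F k₀) ^ 2 ≠ Real.pi ^ 2 * k₀ ^ 2)
    (hS : ∀ ks : Fin n → ℝ, S n F ks = 0) :
    ∀ k l : ℝ, S 2 F ![k, l] = 0 := by
  obtain ⟨k₀, hk0⟩ := hk₀
  obtain ⟨p, rfl⟩ : ∃ p, n = 2*p + 1 + 1 := by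
    obtain ⟨q, hq⟩ := hne; exact ⟨q - 1, by omega⟩
  intro a b
  set A : ℝ := F k₀ + Real.pi * k₀ with hA
  set B : ℝ := F k₀ - Real.pi * k₀ with hB
  have hD : A * B ≠ 0 := by
    rw [hA, hB]; intro h; exact hk0 (by linear_combination h)
  -- the special tuple (a, b, k₀, -k₀, …, k₀, -k₀)
  set tail : Fin (2*p) → ℝ := fun j => if Even (j : ℕ) then k₀ else -k₀ with htail
  set ks : Fin (2*p+1+1) → ℝ := Fin.cons a (Fin.cons b tail) with hks
  -- sum of the tuple
  have hsum : (∑ q, ks q) = a + b := by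
    rw [hks, Fin.sum_cons, Fin.sum_cons, htail]
    rw [Fin.sum_univ_eq_sum_range (fun j => if Even j then k₀ else -k₀) (2*p)]
    rw [stmt14_altsum]
    ring
  -- product of G over the tuple
  have hPG : (∏ q, (F (ks q) + Real.pi * ks q)) = (F a + Real.pi * a) *
      ((F b + Real.pi * b) * (A*B)^p) := by
    rw [hks, Fin.prod_univ_succ, Fin.prod_univ_succ]
    simp only [Fin.cons_zero, Fin.cons_succ]
    congr 2
    have h1 : ∀ j : Fin (2*p), F (tail j) + Real.pi * tail j
        = (fun m : ℕ => if Even m then A else B) (j : ℕ) := by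
      intro j
      rw [htail]
      by_cases h : Even (j : ℕ) <;> simp [h, hA, hB, heven] <;> ring
    rw [Finset.prod_congr rfl (fun j _ => h1 j),
      Fin.prod_univ_eq_prod_range (fun m => if Even m then A else B) (2*p),
      stmt14_altprod]
  -- product of H over the tuple
  have hPH : (∏ q, (F (ks q) - Real.pi * ks q)) = (F a - Real.pi * a) *
      ((F b - Real.pi * b) * (A*B)^p) := by
    rw [hks, Fin.prod_univ_succ, Fin.prod_univ_succ]
    simp only [Fin.cons_zero, Fin.cons_succ]
    congr 2
    have h1 : ∀ j : Fin (2*p), F (tail j) - Real.pi * tail j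
        = (fun m : ℕ => if Even m then B else A) (j : ℕ) := by
      intro j
      rw [htail]
      by_cases h : Even (j : ℕ) <;> simp [h, hA, hB, heven] <;> ring
    rw [Finset.prod_congr rfl (fun j _ => h1 j),
      Fin.prod_univ_eq_prod_range (fun m => if Even m then B else A) (2*p),
      stmt14_altprod, mul_comm B A]
  -- telescoping applied to the tuple
  have hkey : 2 * Real.pi * (∑ j, ks j
        * (∏ q, if q < j then F (ks q) + Real.pi * ks q else 1)
        * (∏ q, if j < q then F (ks q) - Real.pi * ks q else 1))
      = (∏ q, (F (ks q) + Real.pi * ks q)) - ∏ q, (F (ks q) - Real.pi * ks q) := by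
    rw [← stmt14_key (2*p+1+1) (fun q => F (ks q) + Real.pi * ks q)
        (fun q => F (ks q) - Real.pi * ks q), Finset.mul_sum]
    exact Finset.sum_congr rfl fun j _ => by ring
  have hSks := hS ks
  simp only [S, Finset.prod_filter] at hSks
  rw [hsum, hPG] at hSks
  rw [hPG, hPH] at hkey
  have hS2 : S 2 F ![a, b] = (a * (F b - Real.pi * b) + b * (F a + Real.pi * a))
      * (F (a + b) + Real.pi * (a + b))
      - (a + b) * ((F a + Real.pi * a) * (F b + Real.pi * b)) := by
    simp [S, Finset.prod_filter, Fin.sum_univ_two, Fin.prod_univ_two,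
      show ¬((0:Fin 2)<0) from by decide, show ((0:Fin 2)<1) from by decide,
      show ¬((1:Fin 2)<0) from by decide, show ¬((1:Fin 2)<1) from by decide]
  have hfinal : 2 * Real.pi * (A*B)^p * (S 2 F ![a, b]) = 0 := by
    rw [hS2]
    linear_combination (-(F (a + b) + Real.pi * (a + b))) * hkey + 2 * Real.pi * hSks
  have hne' : 2 * Real.pi * (A*B)^p ≠ 0 :=
    mul_ne_zero (mul_ne_zero two_ne_zero Real.pi_ne_zero) (pow_ne_zero p hD)
  exact (mul_eq_zero.mp hfinal).resolve_left hne'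
end

section
/- Let a ∈ ℝ and define F : ℝ → ℝ by F(k) = πk·tanh(ak). Then for every integer n ≥ 1 and all k₁,…,kₙ ∈ ℝ: S_n(F; k₁,…,kₙ) = [((−1)^{n+1} − 1)/(exp(2a(k₁+⋯+kₙ)) + 1)]·(k₁+⋯+kₙ)·Π_{q=1}^{n} [π k_q (tanh(a k_q) + 1)]. In particular, S_n(F; k₁,…,kₙ) = 0 for all k₁,…,kₙ whenever n is odd. -/
open Real Finset
open Real Finset


lemma tanh_add_one' (x : ℝ) : Real.tanh x + 1 = 2 * Real.exp (2*x) / (Real.exp (2*x) + 1) := by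
  rw [Real.tanh_eq_sinh_div_cosh, Real.sinh_eq, Real.cosh_eq]
  have h1 : Real.exp (2*x) = Real.exp x * Real.exp x := by rw [two_mul, Real.exp_add]
  have h2 : Real.exp (-x) = (Real.exp x)⁻¹ := Real.exp_neg x
  have h3 : Real.exp x > 0 := Real.exp_pos x
  have h4 : Real.exp (2*x) + 1 > 0 := by positivity
  rw [h1, h2]
  have h5 : Real.exp x + (Real.exp x)⁻¹ ≠ 0 := by positivity
  field_simp
  ring

lemma tanh_sub_one' (x : ℝ) : Real.tanh x - 1 = -2 / (Real.exp (2*x) + 1) := by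
  rw [Real.tanh_eq_sinh_div_cosh, Real.sinh_eq, Real.cosh_eq]
  have h1 : Real.exp (2*x) = Real.exp x * Real.exp x := by rw [two_mul, Real.exp_add]
  have h2 : Real.exp (-x) = (Real.exp x)⁻¹ := Real.exp_neg x
  have h3 : Real.exp x > 0 := Real.exp_pos x
  have h4 : Real.exp (2*x) + 1 > 0 := by positivity
  rw [h1, h2]
  have h5 : Real.exp x + (Real.exp x)⁻¹ ≠ 0 := by positivity
  field_simp
  ring

lemma core_s15 : ∀ (n : ℕ) (e : Fin n → ℝ),
    ∑ j : Fin n, ((-1:ℝ)^(n + j.val + 1) * ((e j + 1) * ∏ q ∈ Finset.univ.filter (fun q => q < j), e q))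
    = ∏ q, e q - (-1:ℝ)^n := by
  intro n
  induction n with
  | zero => intro e; simp
  | succ n ih =>
    intro e
    rw [Fin.sum_univ_succ, Fin.prod_univ_succ]
    have h0 : (Finset.univ.filter (fun q => q < (0 : Fin (n+1)))) = ∅ := by
      apply Finset.filter_eq_empty_iff.mpr
      intro q _
      exact Fin.not_lt_zero q
    have hs : ∀ i : Fin n,
        (∏ q ∈ Finset.univ.filter (fun q => q < i.succ), e q)
        = e 0 * ∏ q ∈ Finset.univ.filter (fun q => q < i), e q.succ := by
      intro i
      rw [Finset.prod_filter, Finset.prod_filter, Fin.prod_univ_succ]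
      simp [Fin.succ_lt_succ_iff, Fin.succ_pos]
    simp only [h0, hs, Finset.prod_empty]
    have := ih (fun q => e q.succ)
    have hsum : ∑ i : Fin n, ((-1:ℝ)^(n + 1 + (i.succ : Fin (n+1)).val + 1) *
        ((e i.succ + 1) * (e 0 * ∏ q ∈ Finset.univ.filter (fun q => q < i), e q.succ)))
        = e 0 * ∑ i : Fin n, ((-1:ℝ)^(n + i.val + 1) * ((e i.succ + 1) * ∏ q ∈ Finset.univ.filter (fun q => q < i), e q.succ)) := by
      rw [Finset.mul_sum]
      apply Finset.sum_congr rfl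
      intro i _
      have : n + 1 + (i.succ : Fin (n+1)).val + 1 = (n + i.val + 1) + 2 := by
        simp [Fin.val_succ]; ring
      rw [this, pow_add]
      ring
    rw [hsum, this]
    simp [Fin.val_zero, pow_succ]
    ring

lemma prod_split {n : ℕ} (j : Fin n) (c : Fin n → ℝ) :
    (∏ q ∈ Finset.univ.filter (fun q => q < j), c q) * c j *
      ∏ q ∈ Finset.univ.filter (fun q => j < q), c q = ∏ q, c q := by
  have hc : c j = ∏ q : Fin n, if q = j then c q else 1 := by
    rw [Finset.prod_ite_eq' Finset.univ j c]; simp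
  rw [Finset.prod_filter, Finset.prod_filter]
  conv_lhs => rw [hc]
  rw [← Finset.prod_mul_distrib, ← Finset.prod_mul_distrib]
  apply Finset.prod_congr rfl
  intro q _
  rcases lt_trichotomy q j with h | h | h
  · simp [h, h.ne, not_lt.mpr h.le]
  · subst h; simp
  · simp [h, h.ne', not_lt.mpr h.le]

lemma card_gt {n : ℕ} (j : Fin n) :
    (Finset.univ.filter (fun q => j < q)).card = n - 1 - j.val := by
  have : (Finset.univ.filter (fun q => j < q)) = Finset.Ioi j := by
    ext q; simp
  rw [this, Fin.card_Ioi]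

lemma sign_lemma {n : ℕ} (j : Fin n) : ((-1:ℝ))^(n - 1 - j.val) = (-1:ℝ)^(n + j.val + 1) := by
  have hj : j.val < n := j.isLt
  have h : n + j.val + 1 = (n - 1 - j.val) + 2*(j.val + 1) := by omega
  rw [h, pow_add, pow_mul]
  norm_num

/-- for `F(k) = πk tanh(ak)` and every `n ≥ 1`,
`S_n(F; k₁,…,kₙ) = [((−1)^{n+1} − 1)/(e^{2aΣk}+1)]·(Σk)·Π_q πk_q(tanh(ak_q)+1)`;
in particular `S_n(F; ·) ≡ 0` when `n` is odd. -/
theorem stmt15 (a : ℝ) (F : ℝ → ℝ)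
    (hF : ∀ k : ℝ, F k = Real.pi * k * Real.tanh (a * k))
    (n : ℕ) (hn : 1 ≤ n) (ks : Fin n → ℝ) :
    S n F ks =
      (((-1 : ℝ) ^ (n + 1) - 1) / (Real.exp (2 * a * ∑ q, ks q) + 1))
        * (∑ q, ks q) * ∏ q, (Real.pi * ks q * (Real.tanh (a * ks q) + 1)) ∧
      (Odd n → S n F ks = 0) := by
  set K : ℝ := ∑ q, ks q with hK
  set e : Fin n → ℝ := fun q => Real.exp (2 * (a * ks q)) with he
  set c : Fin n → ℝ := fun q => 2 * Real.pi * ks q / (e q + 1) with hc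
  have hπ : (Real.pi : ℝ) ≠ 0 := Real.pi_ne_zero
  have hepos : ∀ q, 0 < e q + 1 := fun q => by positivity
  have hene : ∀ q, e q + 1 ≠ 0 := fun q => (hepos q).ne'
  have hA : ∀ q, F (ks q) + Real.pi * ks q = c q * e q := by
    intro q
    rw [hF, hc]
    have := tanh_add_one' (a * ks q)
    simp only [he]
    rw [show Real.pi * ks q * Real.tanh (a * ks q) + Real.pi * ks q
        = Real.pi * ks q * (Real.tanh (a * ks q) + 1) by ring, this]
    ring
  have hA' : ∀ q, Real.pi * ks q * (Real.tanh (a * ks q) + 1) = c q * e q := by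
    intro q
    have := hA q
    rw [hF] at this
    linarith [this]
  have hB : ∀ q, F (ks q) - Real.pi * ks q = -(c q) := by
    intro q
    rw [hF, hc]
    have := tanh_sub_one' (a * ks q)
    simp only [he]
    rw [show Real.pi * ks q * Real.tanh (a * ks q) - Real.pi * ks q
        = Real.pi * ks q * (Real.tanh (a * ks q) - 1) by ring, this]
    ring
  have hE : Real.exp (2 * a * K) = ∏ q, e q := by
    rw [← Real.exp_sum]
    congr 1
    rw [hK, Finset.mul_sum]
    apply Finset.sum_congr rfl
    intro q _
    ring
  set E : ℝ := ∏ q, e q with hEdef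
  have hEpos : 0 < E := Finset.prod_pos (fun q _ => Real.exp_pos _)
  have hE1 : E + 1 ≠ 0 := by positivity
  -- the sum
  have hterm : ∀ j : Fin n,
      ks j * (∏ q ∈ Finset.univ.filter (fun q => q < j), (F (ks q) + Real.pi * ks q))
        * (∏ q ∈ Finset.univ.filter (fun q => j < q), (F (ks q) - Real.pi * ks q))
      = (∏ q, c q) / (2 * Real.pi)
        * ((-1:ℝ)^(n + j.val + 1) * ((e j + 1) * ∏ q ∈ Finset.univ.filter (fun q => q < j), e q)) := by
    intro j
    have h1 : (∏ q ∈ Finset.univ.filter (fun q => q < j), (F (ks q) + Real.pi * ks q))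
        = (∏ q ∈ Finset.univ.filter (fun q => q < j), c q)
          * (∏ q ∈ Finset.univ.filter (fun q => q < j), e q) := by
      rw [← Finset.prod_mul_distrib]
      exact Finset.prod_congr rfl (fun q _ => hA q)
    have h2 : (∏ q ∈ Finset.univ.filter (fun q => j < q), (F (ks q) - Real.pi * ks q))
        = (-1:ℝ)^(n + j.val + 1) * (∏ q ∈ Finset.univ.filter (fun q => j < q), c q) := by
      rw [← sign_lemma j, ← card_gt j, ← Finset.prod_const]
      rw [← Finset.prod_mul_distrib]
      exact Finset.prod_congr rfl (fun q _ => by rw [hB q]; ring)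
    have h3 : ks j = c j * (e j + 1) / (2 * Real.pi) := by
      rw [hc]
      field_simp
      rw [mul_div_assoc, div_self (hene j), mul_one]
    rw [h1, h2, h3, ← prod_split j c]
    field_simp
  have hsum : (∑ j : Fin n, ks j
      * (∏ q ∈ Finset.univ.filter (fun q => q < j), (F (ks q) + Real.pi * ks q))
      * (∏ q ∈ Finset.univ.filter (fun q => j < q), (F (ks q) - Real.pi * ks q)))
      = (∏ q, c q) / (2 * Real.pi) * (E - (-1:ℝ)^n) := by
    rw [Finset.sum_congr rfl (fun j _ => hterm j), ← Finset.mul_sum, core_s15 n e]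
  have hFK : F K + Real.pi * K = 2 * Real.pi * K * E / (E + 1) := by
    rw [hF]
    have := tanh_add_one' (a * K)
    rw [show Real.pi * K * Real.tanh (a * K) + Real.pi * K
        = Real.pi * K * (Real.tanh (a * K) + 1) by ring, this]
    have hEe : Real.exp (2 * (a * K)) = E := by rw [← hE]; congr 1; ring
    rw [hEe]
    field_simp
  have hprodA : (∏ q, (F (ks q) + Real.pi * ks q)) = (∏ q, c q) * E := by
    rw [← Finset.prod_mul_distrib]
    exact Finset.prod_congr rfl (fun q _ => hA q)
  have hprodA' : (∏ q, (Real.pi * ks q * (Real.tanh (a * ks q) + 1))) = (∏ q, c q) * E := by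
    rw [← Finset.prod_mul_distrib]
    exact Finset.prod_congr rfl (fun q _ => hA' q)
  have hmain : S n F ks =
      (((-1 : ℝ) ^ (n + 1) - 1) / (Real.exp (2 * a * ∑ q, ks q) + 1))
        * (∑ q, ks q) * ∏ q, (Real.pi * ks q * (Real.tanh (a * ks q) + 1)) := by
    rw [S, hsum, hFK, hprodA, hprodA', ← hK, hE, pow_succ]
    field_simp
    ring
  refine ⟨hmain, fun hodd => ?_⟩
  rw [hmain]
  have : ((-1 : ℝ) ^ (n + 1)) = 1 := (hodd.add_one).neg_one_pow
  rw [this]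
  simp
end

section
/- Let a ∈ ℝ, a ≠ 0, and define F : ℝ → ℝ by F(k) = πk·coth(ak) for k ≠ 0 and F(0) = π/a. Then for every integer n ≥ 1 and all k₁,…,kₙ ∈ ℝ: S_n(F; k₁,…,kₙ) = 0. -/
open Real Finset
open Real Finset

lemma Iio_zero_fin (n : ℕ) : (Finset.Iio (0 : Fin (n+1))) = ∅ := by
  ext q; simp

lemma Iio_succ_fin (n : ℕ) (i : Fin n) :
    (Finset.Iio i.succ : Finset (Fin (n+1))) = insert 0 ((Finset.Iio i).map (Fin.succEmb n)) := by
  ext q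
  simp only [Finset.mem_Iio, Finset.mem_insert, Finset.mem_map, Fin.succEmb]
  constructor
  · refine Fin.cases ?_ ?_ q
    · intro _; exact Or.inl rfl
    · intro q' hq'
      exact Or.inr ⟨q', Fin.succ_lt_succ_iff.mp hq', rfl⟩
  · rintro (rfl | ⟨q', hq', rfl⟩)
    · exact Fin.succ_pos i
    · exact Fin.succ_lt_succ_iff.mpr hq'

lemma tel : ∀ (n : ℕ) (G H : Fin n → ℝ),
    (∑ j, (G j - H j) * (∏ q ∈ Finset.Iio j, G q) * (∏ q ∈ Finset.Ioi j, H q))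
      = ∏ q, G q - ∏ q, H q := by
  intro n
  induction n with
  | zero => intro G H; simp
  | succ n ih =>
    intro G H
    rw [Fin.sum_univ_succ, Fin.prod_univ_succ, Fin.prod_univ_succ]
    have h0 : (∏ q ∈ Finset.Ioi (0 : Fin (n+1)), H q) = ∏ q : Fin n, H q.succ :=
      Fin.prod_Ioi_zero _
    have hterm : ∀ i : Fin n,
        (G i.succ - H i.succ) * (∏ q ∈ Finset.Iio i.succ, G q) *
          (∏ q ∈ Finset.Ioi i.succ, H q)
        = G 0 * ((G i.succ - H i.succ) * (∏ q ∈ Finset.Iio i, G q.succ) *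
            (∏ q ∈ Finset.Ioi i, H q.succ)) := by
      intro i
      rw [Iio_succ_fin, Fin.prod_Ioi_succ]
      rw [Finset.prod_insert (by simp [Fin.succEmb, Fin.succ_ne_zero])]
      rw [Finset.prod_map]
      simp only [Fin.succEmb, Function.Embedding.coeFn_mk]
      ring
    rw [Finset.sum_congr rfl (fun i _ => hterm i), ← Finset.mul_sum, ih, Iio_zero_fin, h0]
    ring


/-- for `a ≠ 0` and `F(k) = πk coth(ak)` (for `k ≠ 0`),
extended by `F(0) = π/a`, one has `S_n(F; ·) ≡ 0` for every `n ≥ 1`. -/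
theorem stmt16 (a : ℝ) (ha : a ≠ 0) (F : ℝ → ℝ)
    (hF0 : F 0 = Real.pi / a)
    (hF : ∀ k : ℝ, k ≠ 0 →
      F k = Real.pi * k * (Real.cosh (a * k) / Real.sinh (a * k)))
    (n : ℕ) (hn : 1 ≤ n) (ks : Fin n → ℝ) :
    S n F ks = 0 := by
  set G : ℝ → ℝ := fun x => F x + Real.pi * x with hG
  set H : ℝ → ℝ := fun x => F x - Real.pi * x with hH
  have hsinh : ∀ x : ℝ, x ≠ 0 → Real.sinh (a * x) ≠ 0 := by
    intro x hx
    rw [Real.sinh_ne_zero]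
    exact mul_ne_zero ha hx
  have hGH : ∀ x : ℝ, H x = G x * Real.exp (-(2 * a * x)) := by
    intro x
    by_cases hx : x = 0
    · subst hx; simp [hH, hG, hF0]
    · have hs := hsinh x hx
      simp only [hH, hG, hF x hx]
      have hc : Real.cosh (a*x) + Real.sinh (a*x) = Real.exp (a*x) := Real.cosh_add_sinh _
      have hc' : Real.cosh (a*x) - Real.sinh (a*x) = Real.exp (-(a*x)) := Real.cosh_sub_sinh _
      have he : Real.exp (a*x) * Real.exp (-(2*a*x)) = Real.exp (-(a*x)) := by
        rw [← Real.exp_add]; ring_nf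
      have key : (Real.cosh (a*x) + Real.sinh (a*x)) * Real.exp (-(2*a*x))
          = Real.cosh (a*x) - Real.sinh (a*x) := by
        linear_combination Real.exp (-(2*a*x)) * hc + he - hc'
      field_simp
      ring_nf at key ⊢
      linarith [key]
  have hGs : ∀ s : ℝ, G s * (1 - Real.exp (-(2 * a * s))) = 2 * Real.pi * s := by
    intro s
    by_cases hs0 : s = 0
    · subst hs0; simp
    · have hs := hsinh s hs0
      simp only [hG, hF s hs0]
      have hc : Real.cosh (a*s) + Real.sinh (a*s) = Real.exp (a*s) := Real.cosh_add_sinh _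
      have hsinh_eq : Real.sinh (a*s) = (Real.exp (a*s) - Real.exp (-(a*s))) / 2 :=
        Real.sinh_eq _
      have he : Real.exp (a*s) * Real.exp (-(2*a*s)) = Real.exp (-(a*s)) := by
        rw [← Real.exp_add]; ring_nf
      have key2 : (Real.cosh (a*s) + Real.sinh (a*s)) * (1 - Real.exp (-(2*a*s)))
          = 2 * Real.sinh (a*s) := by
        linear_combination (1 - Real.exp (-(2*a*s))) * hc - he - 2 * hsinh_eq
      field_simp
      ring_nf at key2 ⊢
      linarith [key2]
  set s : ℝ := ∑ q, ks q with hsdef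
  have hfilt1 : ∀ j : Fin n, (Finset.univ.filter (fun q => q < j)) = Finset.Iio j := by
    intro j; ext q; simp
  have hfilt2 : ∀ j : Fin n, (Finset.univ.filter (fun q => j < q)) = Finset.Ioi j := by
    intro j; ext q; simp
  have hprodH : (∏ q, H (ks q)) = (∏ q, G (ks q)) * Real.exp (-(2 * a * s)) := by
    rw [hsdef]
    rw [show (∏ q, H (ks q)) = ∏ q, (G (ks q) * Real.exp (-(2 * a * ks q))) from
      Finset.prod_congr rfl (fun q _ => hGH (ks q))]
    rw [Finset.prod_mul_distrib, ← Real.exp_sum]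
    congr 1
    rw [Finset.sum_neg_distrib, ← Finset.mul_sum]
  have hsum : (2 * Real.pi) * (∑ j : Fin n, ks j
      * (∏ q ∈ Finset.univ.filter (fun q => q < j), (F (ks q) + Real.pi * ks q))
      * (∏ q ∈ Finset.univ.filter (fun q => j < q), (F (ks q) - Real.pi * ks q)))
      = (∏ q, G (ks q)) * (1 - Real.exp (-(2 * a * s))) := by
    rw [Finset.mul_sum]
    have : ∀ j : Fin n, (2 * Real.pi) * (ks j
        * (∏ q ∈ Finset.univ.filter (fun q => q < j), (F (ks q) + Real.pi * ks q))
        * (∏ q ∈ Finset.univ.filter (fun q => j < q), (F (ks q) - Real.pi * ks q)))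
        = (G (ks j) - H (ks j)) * (∏ q ∈ Finset.Iio j, G (ks q))
          * (∏ q ∈ Finset.Ioi j, H (ks q)) := by
      intro j
      rw [hfilt1, hfilt2]
      have : G (ks j) - H (ks j) = 2 * Real.pi * ks j := by simp [hG, hH]; ring
      rw [this]
      simp only [hG, hH]
      ring
    rw [Finset.sum_congr rfl (fun j _ => this j), tel n (fun q => G (ks q)) (fun q => H (ks q)),
      hprodH]
    ring
  have hpi : (2 * Real.pi) ≠ 0 := by positivity
  have key : (2 * Real.pi) * S n F ks = 0 := by
    rw [S]
    rw [mul_sub, ← mul_assoc, hsum]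
    have hGsdef : F s + Real.pi * s = G s := rfl
    rw [← hsdef, hGsdef]
    have : (∏ q, G (ks q)) * (1 - Real.exp (-(2 * a * s))) * G s
        = (∏ q, G (ks q)) * (2 * Real.pi * s) := by
      rw [mul_assoc, mul_comm (1 - Real.exp (-(2 * a * s))) (G s), ← mul_assoc, mul_assoc,
        hGs s]
    rw [this]
    have : (∏ q, (F (ks q) + Real.pi * ks q)) = ∏ q, G (ks q) := rfl
    rw [this]
    ring
  exact (mul_eq_zero.mp key).resolve_left hpi
end
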